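/- arXiv:2510.19523 — 12 statements merged into one kernel-verified Lean document; each statement's English description precedes it below -/
import Mathlib

section
/- Let H be a right quaternionic module and T a right linear operator on H. For every s ∈ ℍ, there exists x ≠ 0 in H with Tx = x•s if and only if there exists v ≠ 0 in H with T(Tv) − (Tv)•(2Re(s)) + v•|s|² = 0. In other words, the set of right eigenvalues σ_r(T) equals the S-point spectrum σ_sp(T). -/
/-!
`Q_s(T)` factors as `(T - R_{s̄}) ∘ (T - R_s)` and, since `Q_{s̄} = Q_s`, also as
`(T - R_s) ∘ (T - R_{s̄})`, where `R_a x = x • a` commutes with `T`. The first factorization shows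
that an `s`-eigenvector lies in the kernel of `Q_s(T)`. Conversely, if `Q_s(T) v = 0` then either
`w = Tv - v • s̄` is a nonzero `s`-eigenvector, or `v` is an `s̄`-eigenvector; in the latter case
`v • q` is an `s`-eigenvector for any `q ≠ 0` with `s̄ q = q s`.
-/

open Quaternion MulOpposite

namespace LinearMap

variable {R M : Type*}

theorem apply_smul_eq_smul_of_semiconjBy [Semiring R] [AddCommMonoid M] [Module R M]
    (T : M →ₗ[R] M) {a b c : R} {v : M} (hv : T v = a • v) (h : SemiconjBy c a b) :
    T (c • v) = b • c • v := by
  rw [map_smul, hv, smul_smul, h.eq, mul_smul]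

theorem map_sub_smul_sub_smul [Ring R] [AddCommGroup M] [Module R M]
    (T : M →ₗ[R] M) (a b : R) (v : M) :
    T (T v - a • v) - b • (T v - a • v) = T (T v) - (a + b) • T v + (b * a) • v := by
  rw [map_sub, map_smul, smul_sub, smul_smul, add_smul]
  abel

end LinearMap

namespace Quaternion

/-- The witness is a pure quaternion orthogonal to `im s`; such quaternions anticommute with
`im s`. -/
theorem exists_ne_zero_semiconjBy_star {R : Type*} [CommRing R] [Nontrivial R] (s : ℍ[R]) :
    ∃ q : ℍ[R], q ≠ 0 ∧ SemiconjBy q s (star s) := by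
  by_cases h : s.imI = 0 ∧ s.imJ = 0
  · refine ⟨show ℍ[R] from ⟨0, 1, 0, 0⟩, ?_, ?_⟩
    · rw [Ne, Quaternion.ext_iff]
      simp
    · rw [SemiconjBy, Quaternion.ext_iff, re_mul, re_mul, imI_mul, imI_mul, imJ_mul, imJ_mul,
        imK_mul, imK_mul]
      simp [h.1, h.2]
  · refine ⟨show ℍ[R] from ⟨0, -s.imJ, s.imI, 0⟩, ?_, ?_⟩
    · contrapose! h
      rw [Quaternion.ext_iff] at h
      simpa [and_comm] using h
    · rw [SemiconjBy, Quaternion.ext_iff, re_mul, re_mul, imI_mul, imI_mul, imJ_mul, imJ_mul,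
        imK_mul, imK_mul]
      simp only [re_star, imI_star, imJ_star, imK_star]
      and_intros <;> ring

theorem map_map_sub_two_re_smul_add_norm_sq_smul {H : Type*} [AddCommGroup H]
    [Module ℍ[ℝ]ᵐᵒᵖ H] (T : H →ₗ[ℍ[ℝ]ᵐᵒᵖ] H) (s : ℍ[ℝ]) (v : H) :
    T (T v) - op ((2 * s.re : ℝ) : ℍ[ℝ]) • T v + op ((‖s‖ ^ 2 : ℝ) : ℍ[ℝ]) • v =
      T (T v - op s • v) - op (star s) • (T v - op s • v) := by
  rw [T.map_sub_smul_sub_smul, ← op_add, ← op_mul, self_add_star', self_mul_star,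
    normSq_eq_norm_mul_self, sq]

end Quaternion

/-- For a right linear operator `T` on a right quaternionic module,
`s` is a right eigenvalue of `T` iff `s` belongs to the S-point spectrum of `T`,
i.e. `σ_r(T) = σ_sp(T)`. -/
theorem rightEigenvalue_iff_sPointSpectrum {H : Type*} [AddCommGroup H]
    [Module ℍ[ℝ]ᵐᵒᵖ H] (T : H →ₗ[ℍ[ℝ]ᵐᵒᵖ] H) (s : ℍ[ℝ]) :
    (∃ x : H, x ≠ 0 ∧ T x = op s • x) ↔
      (∃ v : H, v ≠ 0 ∧
        T (T v) - op ((2 * s.re : ℝ) : ℍ[ℝ]) • T v + op ((‖s‖ ^ 2 : ℝ) : ℍ[ℝ]) • v = 0) := by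
  constructor
  · rintro ⟨x, hx, hTx⟩
    refine ⟨x, hx, ?_⟩
    rw [map_map_sub_two_re_smul_add_norm_sq_smul, hTx, sub_self, map_zero, smul_zero, sub_zero]
  · rintro ⟨v, hv, hQ⟩
    have hQ_star := map_map_sub_two_re_smul_add_norm_sq_smul T (star s) v
    rw [re_star, norm_star, star_star] at hQ_star
    rw [hQ_star] at hQ
    by_cases hw : T v - op (star s) • v = 0
    · obtain ⟨q, hq, hqs⟩ := exists_ne_zero_semiconjBy_star s
      exact ⟨op q • v, smul_ne_zero ((op_ne_zero_iff q).mpr hq) hv,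
        T.apply_smul_eq_smul_of_semiconjBy (sub_eq_zero.mp hw) hqs.op⟩
    · exact ⟨_, hw, sub_eq_zero.mp hQ⟩
end

section
/- Let H be a right quaternionic module, T a right linear operator on H, and ω ∈ ℍ ∖ ℝ. Then the kernel of Q_ω(T), i.e. {v ∈ H : T(Tv) − (Tv)•(2Re(ω)) + v•|ω|² = 0}, equals the ℍᵐᵒᵖ-submodule of H generated by the set {x ∈ H : Tx = x•ω}. -/
/-!
Put `α = ω`, `β = ω̄` acting on the right. Both are roots of `X² - 2Re(ω) X + |ω|²`, whose
coefficients are real, hence central, so `α β = β α` and `Q_ω(T)` factors as `(T - α)(T - β)`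
in either order. For `v` in the kernel, `T v - v • ω̄` is a right `ω`-eigenvector, `T v - v • ω`
a right `ω̄`-eigenvector, and their difference is `v • (ω - ω̄)`, with `ω - ω̄` invertible. Finally
`ω̄` is conjugate to `ω`: for any `a` with `q = a ω - ω a ≠ 0` (such an `a` exists because `ω` is
not central) one has `ω̄ q = q ω`, so `x ↦ x • q` maps right `ω̄`-eigenvectors to right
`ω`-eigenvectors.
-/

open Quaternion MulOpposite

section QuadraticKernel

variable {A M : Type*} [Ring A] [AddCommGroup M] [Module A M]

theorem commute_of_add_mem_center {α β : A} (h : α + β ∈ Set.center A) : Commute α β := by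
  have hα := (Semigroup.mem_center_iff.mp h α).symm
  rw [mul_add, add_mul, add_right_inj] at hα
  exact hα.symm

theorem smul_comm_of_mem_center {s : A} (hs : s ∈ Set.center A) (a : A) (x : M) :
    s • a • x = a • s • x := by
  rw [smul_smul, smul_smul, Semigroup.mem_center_iff.mp hs a]

/-- `ker Q_ω(T)` is the case `A = ℍᵐᵒᵖ`, `s = 2 Re ω`, `p = |ω|²`. -/
def quadraticKer (T : M →ₗ[A] M) {s p : A} (hs : s ∈ Set.center A) (hp : p ∈ Set.center A) :
    Submodule A M where
  carrier := {v | T (T v) - s • T v + p • v = 0}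
  zero_mem' := by simp
  add_mem' {x y} hx hy := by
    simp only [Set.mem_ofPred_eq, map_add, smul_add] at hx hy ⊢
    have hsplit : T (T x) + T (T y) - (s • T x + s • T y) + (p • x + p • y)
        = (T (T x) - s • T x + p • x) + (T (T y) - s • T y + p • y) := by abel
    rw [hsplit, hx, hy, add_zero]
  smul_mem' a x hx := by
    simp only [Set.mem_ofPred_eq, map_smul] at hx ⊢
    rw [smul_comm_of_mem_center hs, smul_comm_of_mem_center hp, ← smul_sub, ← smul_add, hx,
      smul_zero]

variable {T : M →ₗ[A] M} {s p α β : A} {hs : s ∈ Set.center A} {hp : p ∈ Set.center A}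

theorem mem_quadraticKer_of_apply_eq_smul (hsum : α + β = s) (hprod : α * β = p) {x : M}
    (hx : T x = α • x) : x ∈ quadraticKer T hs hp := by
  have hαβ : Commute α β := commute_of_add_mem_center (by rwa [hsum])
  have hroot : α * α - s * α + p = 0 := by
    rw [← hsum, ← hprod, hαβ.eq]; noncomm_ring
  show T (T x) - s • T x + p • x = 0
  rw [hx, map_smul, hx, smul_smul, smul_smul, ← sub_smul, ← add_smul, hroot, zero_smul]

theorem apply_sub_smul_eq_smul_of_mem_quadraticKer (hsum : α + β = s) (hprod : α * β = p)
    {v : M} (hv : v ∈ quadraticKer T hs hp) : T (T v - β • v) = α • (T v - β • v) := by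
  have hTT : T (T v) = s • T v - p • v := by
    rw [← sub_eq_zero, ← hv]; abel
  rw [map_sub, map_smul, hTT, ← hsum, ← hprod, smul_sub, smul_smul, add_smul, mul_smul]
  abel

theorem apply_smul_eq_smul_of_mul_eq {q : A} (hq : q * β = α * q) {x : M}
    (hx : T x = β • x) : T (q • x) = α • q • x := by
  rw [map_smul, hx, smul_smul, hq, mul_smul]

theorem commutator_mul_eq_mul_commutator (hs : s ∈ Set.center A) (hp : p ∈ Set.center A)
    (hsum : α + β = s) (hprod : α * β = p) (a : A) :
    (α * a - a * α) * β = α * (α * a - a * α) := by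
  have hβ : β = s - α := by rw [← hsum]; abel
  have hαα : α * α = s * α - p := by
    have hαβ : Commute α β := commute_of_add_mem_center (by rwa [hsum])
    rw [← hprod, ← hsum, hαβ.eq]; noncomm_ring
  have has : a * s = s * a := Semigroup.mem_center_iff.mp hs a
  have hαs : α * s = s * α := Semigroup.mem_center_iff.mp hs α
  have hap : a * p = p * a := Semigroup.mem_center_iff.mp hp a
  rw [← sub_eq_zero, hβ]
  calc (α * a - a * α) * (s - α) - α * (α * a - a * α)
      = α * (a * s) - a * (α * s) + a * (α * α) - α * α * a := by noncomm_ring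
    _ = 0 := by rw [has, hαs, hαα, ← mul_assoc, hαs, mul_sub a, hap]; noncomm_ring

end QuadraticKernel

open Submodule in
theorem quadraticKer_eq_span {A M : Type*} [DivisionRing A] [AddCommGroup M] [Module A M]
    {T : M →ₗ[A] M} {s p α β : A} {hs : s ∈ Set.center A} {hp : p ∈ Set.center A}
    (hsum : α + β = s) (hprod : α * β = p) (hne : α ≠ β) (hα : α ∉ Set.center A) :
    quadraticKer T hs hp = span A {x | T x = α • x} := by
  refine le_antisymm (fun v hv ↦ ?_)
    (span_le.mpr fun x hx ↦ mem_quadraticKer_of_apply_eq_smul hsum hprod hx)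
  have hαβ : Commute α β := commute_of_add_mem_center (by rwa [hsum])
  have hx₁ : T (T v - β • v) = α • (T v - β • v) :=
    apply_sub_smul_eq_smul_of_mem_quadraticKer hsum hprod hv
  have hx₂ : T (T v - α • v) = β • (T v - α • v) :=
    apply_sub_smul_eq_smul_of_mem_quadraticKer (by rwa [add_comm]) (by rwa [← hαβ.eq]) hv
  obtain ⟨a, ha⟩ : ∃ a, α * a - a * α ≠ 0 := by
    by_contra! h
    exact hα (Semigroup.mem_center_iff.mpr fun a ↦ (sub_eq_zero.mp (h a)).symm)
  have hqx₂ := apply_smul_eq_smul_of_mul_eq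
    (commutator_mul_eq_mul_commutator hs hp hsum hprod a) hx₂
  have hv_eq : v = (α - β)⁻¹ •
      ((T v - β • v) - (α * a - a * α)⁻¹ • (α * a - a * α) • (T v - α • v)) := by
    rw [inv_smul_smul₀ ha, sub_sub_sub_cancel_left, ← sub_smul,
      inv_smul_smul₀ (sub_ne_zero.mpr hne)]
  rw [hv_eq]
  exact smul_mem _ _ (sub_mem (subset_span hx₁) (smul_mem _ _ (subset_span hqx₂)))

namespace Quaternion

theorem coe_mem_center (r : ℝ) : (r : ℍ[ℝ]) ∈ Set.center ℍ[ℝ] :=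
  Semigroup.mem_center_iff.mpr fun a ↦ (coe_commutes r a).symm

theorem mem_range_coe_of_mem_center {ω : ℍ[ℝ]} (h : ω ∈ Set.center ℍ[ℝ]) :
    ω ∈ Set.range ((↑) : ℝ → ℍ[ℝ]) := by
  have hi := Semigroup.mem_center_iff.mp h ((equivTuple ℝ).symm ![0, 1, 0, 0])
  have hj := Semigroup.mem_center_iff.mp h ((equivTuple ℝ).symm ![0, 0, 1, 0])
  have hiJ := congrArg QuaternionAlgebra.imJ hi
  have hiK := congrArg QuaternionAlgebra.imK hi
  have hjK := congrArg QuaternionAlgebra.imK hj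
  rw [imJ_mul, imJ_mul] at hiJ
  rw [imK_mul, imK_mul] at hiK hjK
  simp only [equivTuple_symm_apply, Fin.isValue, Matrix.cons_val_zero, Matrix.cons_val_one,
    Matrix.cons_val, zero_mul, one_mul, zero_sub, add_zero, mul_zero, sub_self, mul_one,
    zero_add, sub_zero] at hiJ hiK hjK
  refine ⟨ω.re, ?_⟩
  ext <;> simp <;> linarith

end Quaternion

/-- For a right linear operator `T` on a right quaternionic module and
`ω ∈ ℍ ∖ ℝ`, the kernel of `Q_ω(T)` equals the `ℍᵐᵒᵖ`-submodule generated by the right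
eigenspace `{x : T x = x • ω}`. -/
theorem ker_Qs_eq_span_rightEigenspace {H : Type*} [AddCommGroup H]
    [Module ℍ[ℝ]ᵐᵒᵖ H] (T : H →ₗ[ℍ[ℝ]ᵐᵒᵖ] H) (ω : ℍ[ℝ])
    (hω : ω ∉ Set.range ((↑) : ℝ → ℍ[ℝ])) :
    {v : H | T (T v) - op ((2 * ω.re : ℝ) : ℍ[ℝ]) • T v + op ((‖ω‖ ^ 2 : ℝ) : ℍ[ℝ]) • v = 0}
      = ↑(Submodule.span ℍ[ℝ]ᵐᵒᵖ {x : H | T x = op ω • x}) := by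
  have hsum : op ω + op (star ω) = op ((2 * ω.re : ℝ) : ℍ[ℝ]) := by
    rw [← op_add, self_add_star']
  have hprod : op ω * op (star ω) = op ((‖ω‖ ^ 2 : ℝ) : ℍ[ℝ]) := by
    rw [← op_mul, star_mul_self, normSq_eq_norm_mul_self, sq]
  have hne : op ω ≠ op (star ω) := fun h ↦
    hω ⟨ω.re, (star_eq_self.mp (op_injective h).symm).symm⟩
  have hα : op ω ∉ Set.center ℍ[ℝ]ᵐᵒᵖ := fun h ↦
    hω (mem_range_coe_of_mem_center (op_mem_center_iff.mp h))
  exact congrArg SetLike.coe <| quadraticKer_eq_span (T := T)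
    (hs := op_mem_center_iff.mpr (coe_mem_center _))
    (hp := op_mem_center_iff.mpr (coe_mem_center _)) hsum hprod hne hα
end

section
/- Let H be a right quaternionic module and T a right linear operator on H. Suppose Tx = x•ω for some x ≠ 0 and some ω ∈ ℍ, and let ω' ∈ ℍ satisfy Re(ω') = Re(ω) and |ω'| = |ω|. Then there exists y ≠ 0 in H with Ty = y•ω'. In particular, the set of right eigenvalues of T is an axially symmetric subset of ℍ. -/
open Quaternion MulOpposite

/-!
Two quaternions with the same real part and norm are conjugate: their imaginary parts `u`, `v`
have equal squares, so `q = u + v` satisfies `q * v = u * q`; when `u + v = 0` any nonzero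
imaginary `q` orthogonal to `u` anticommutes with `u` and does the job. Given `T x = x • ω`,
the vector `y = x • q` then satisfies `T y = x • (ω * q) = x • (q * ω') = y • ω'`.
-/

namespace Quaternion

variable {R : Type*} [CommRing R]

theorem mul_eq_neg_mul_of_re_eq_zero {u q : ℍ[R]} (hu : u.re = 0) (hq : q.re = 0)
    (horth : u.imI * q.imI + u.imJ * q.imJ + u.imK * q.imK = 0) : q * u = -(u * q) := by
  ext
  · simp [hu, hq]
    linear_combination -2 * horth
  all_goals simp [hu, hq]; ring

theorem exists_ne_zero_mul_eq_neg_mul [Nontrivial R] {u : ℍ[R]} (hu : u.re = 0) :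
    ∃ q : ℍ[R], q ≠ 0 ∧ q * u = -(u * q) := by
  by_cases hJK : u.imJ = 0 ∧ u.imK = 0
  · refine ⟨⟨0, 0, 1, 0⟩, fun h => by simpa using congrArg QuaternionAlgebra.imJ h, ?_⟩
    exact mul_eq_neg_mul_of_re_eq_zero hu rfl (by simp [hJK.1])
  · refine ⟨⟨0, 0, -u.imK, u.imJ⟩, fun h => hJK ?_, mul_eq_neg_mul_of_re_eq_zero hu rfl ?_⟩
    · exact ⟨by simpa using congrArg QuaternionAlgebra.imK h,
        by simpa using congrArg QuaternionAlgebra.imJ h⟩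
    · simp only
      ring

theorem exists_ne_zero_mul_eq_mul_of_mul_self_eq [Nontrivial R] {u v : ℍ[R]} (hu : u.re = 0)
    (huv : u * u = v * v) : ∃ q : ℍ[R], q ≠ 0 ∧ q * v = u * q := by
  by_cases hvu : v = -u
  · obtain ⟨q, hq0, hq⟩ := exists_ne_zero_mul_eq_neg_mul hu
    exact ⟨q, hq0, by rw [hvu, mul_neg, hq, neg_neg]⟩
  · refine ⟨u + v, fun h => hvu (eq_neg_of_add_eq_zero_right h), ?_⟩
    rw [add_mul, mul_add, huv, add_comm]

theorem im_mul_self_eq_of_re_eq_of_normSq_eq {ω ω' : ℍ[R]} (hre : ω'.re = ω.re)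
    (hnormSq : normSq ω' = normSq ω) : ω.im * ω.im = ω'.im * ω'.im := by
  rw [← sq, ← sq, im_sq, im_sq]
  congr 2
  simp only [normSq_def', re_im, imI_im, imJ_im, imK_im] at hnormSq ⊢
  rw [hre] at hnormSq
  linear_combination -hnormSq

theorem exists_ne_zero_mul_eq_mul_of_re_eq_of_normSq_eq [Nontrivial R] {ω ω' : ℍ[R]}
    (hre : ω'.re = ω.re) (hnormSq : normSq ω' = normSq ω) :
    ∃ q : ℍ[R], q ≠ 0 ∧ q * ω' = ω * q := by
  obtain ⟨q, hq0, hq⟩ := exists_ne_zero_mul_eq_mul_of_mul_self_eq (re_im ω)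
    (im_mul_self_eq_of_re_eq_of_normSq_eq hre hnormSq)
  refine ⟨q, hq0, ?_⟩
  rw [← re_add_im ω', ← re_add_im ω, mul_add, add_mul, hq, hre, (coe_commute ω.re q).eq]

end Quaternion

theorem LinearMap.apply_op_smul_of_mul_eq_mul {R M : Type*} [Ring R] [AddCommGroup M]
    [Module Rᵐᵒᵖ M] (T : M →ₗ[Rᵐᵒᵖ] M) {ω ω' q : R} (hq : q * ω' = ω * q) {x : M}
    (hx : T x = op ω • x) : T (op q • x) = op ω' • op q • x := by
  rw [map_smul, hx, smul_smul, smul_smul, ← op_mul, ← op_mul, hq]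

/-- If `T x = x • ω` for some `x ≠ 0` and `ω' ∈ ℍ` has the same real part
and norm as `ω`, then `ω'` is also a right eigenvalue of `T`; the set of right eigenvalues
of `T` is axially symmetric. -/
theorem rightEigenvalues_axiallySymmetric {H : Type*} [AddCommGroup H]
    [Module ℍ[ℝ]ᵐᵒᵖ H] (T : H →ₗ[ℍ[ℝ]ᵐᵒᵖ] H) (ω ω' : ℍ[ℝ]) (x : H) (hx : x ≠ 0)
    (hTx : T x = op ω • x) (hre : ω'.re = ω.re) (hnorm : ‖ω'‖ = ‖ω‖) :
    ∃ y : H, y ≠ 0 ∧ T y = op ω' • y := by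
  have hnormSq : normSq ω' = normSq ω := by
    rw [normSq_eq_norm_mul_self, normSq_eq_norm_mul_self, hnorm]
  obtain ⟨q, hq0, hq⟩ := exists_ne_zero_mul_eq_mul_of_re_eq_of_normSq_eq hre hnormSq
  exact ⟨op q • x, smul_ne_zero ((op_ne_zero_iff q).mpr hq0) hx,
    T.apply_op_smul_of_mul_eq_mul hq hTx⟩
end

section
/- Let s ∈ ℍ with s ∉ ℝ (so s − s̄ ≠ 0), let (w_n)_{n≥1} be a sequence of positive real numbers, and let (x_n)_{n≥1} be a sequence of quaternions satisfying |s|²·x_n − 2Re(s)·w_n·x_{n+1} + w_n·w_{n+1}·x_{n+2} = 0 for all n ≥ 1. Then for every n ≥ 2, x_{n+1} = (w₁w₂⋯w_n)⁻¹ · ( (sⁿ − s̄ⁿ)(s − s̄)⁻¹ · w₁ · x₂ − (sⁿ·s̄ − s·s̄ⁿ)(s − s̄)⁻¹ · x₁ ). -/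
/-!
Multiplying `x (n + 1)` by `w₁ ⋯ wₙ` turns the recurrence into `zₙ₊₂ = 2 Re(s) zₙ₊₁ - |s|² zₙ`,
whose coefficients are real, hence central in `ℍ`. Both `s` and `s̄` are roots of
`X² - 2 Re(s) X + |s|²`, so `n ↦ sⁿ` and `n ↦ s̄ⁿ` solve this recurrence, and so does every
combination of them multiplied by quaternions on either side, in particular the claimed right-hand
side times `w₁ ⋯ wₙ`. Two solutions agreeing at `n = 0, 1` agree everywhere.
-/

open Quaternion Finset

section Recurrence

variable {K M A : Type*} [CommRing K]

def IsRecurrenceSolution [AddCommGroup M] [Module K M] (c d : K) (u : ℕ → M) : Prop :=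
  ∀ n, u (n + 2) = c • u (n + 1) - d • u n

namespace IsRecurrenceSolution

variable {c d : K}

theorem sub [AddCommGroup M] [Module K M] {u v : ℕ → M} (hu : IsRecurrenceSolution c d u)
    (hv : IsRecurrenceSolution c d v) : IsRecurrenceSolution c d (fun n => u n - v n) := by
  intro n
  dsimp only
  rw [hu n, hv n, smul_sub, smul_sub]
  abel

theorem ext [AddCommGroup M] [Module K M] {u v : ℕ → M} (hu : IsRecurrenceSolution c d u)
    (hv : IsRecurrenceSolution c d v) (h₀ : u 0 = v 0) (h₁ : u 1 = v 1) : u = v := by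
  funext n
  induction n using Nat.twoStepInduction with
  | zero => exact h₀
  | one => exact h₁
  | more n ih₀ ih₁ => rw [hu n, hv n, ih₀, ih₁]

variable [Ring A] [Algebra K A]

theorem mul_const {u : ℕ → A} (hu : IsRecurrenceSolution c d u) (a : A) :
    IsRecurrenceSolution c d (fun n => u n * a) := by
  intro n
  simp only [hu n, sub_mul, smul_mul_assoc]

theorem const_mul {u : ℕ → A} (hu : IsRecurrenceSolution c d u) (a : A) :
    IsRecurrenceSolution c d (fun n => a * u n) := by
  intro n
  simp only [hu n, mul_sub, mul_smul_comm]

end IsRecurrenceSolution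

theorem isRecurrenceSolution_pow [Ring A] [Algebra K A] {c d : K} {a : A}
    (ha : a ^ 2 = c • a - d • 1) : IsRecurrenceSolution c d (a ^ ·) := by
  intro n
  dsimp only
  rw [pow_add, ha, mul_sub, mul_smul_comm, mul_smul_comm, mul_one, ← pow_succ]

theorem isRecurrenceSolution_binet [Ring A] [Algebra K A] {c d : K} {s t : A}
    (hs : s ^ 2 = c • s - d • 1) (ht : t ^ 2 = c • t - d • 1) (a b : A) :
    IsRecurrenceSolution c d fun n => (s ^ n - t ^ n) * a - (s ^ n * t - s * t ^ n) * b :=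
  have hs := isRecurrenceSolution_pow hs
  have ht := isRecurrenceSolution_pow ht
  ((hs.sub ht).mul_const a).sub (((hs.mul_const t).sub (ht.const_mul s)).mul_const b)

theorem isRecurrenceSolution_prod_smul [AddCommGroup M] [Module K M] {c d : K} {w : ℕ → K}
    {x : ℕ → M}
    (h : ∀ n, 1 ≤ n → d • x n - (c * w n) • x (n + 1) + (w n * w (n + 1)) • x (n + 2) = 0) :
    IsRecurrenceSolution c d (fun n => (∏ k ∈ Icc 1 n, w k) • x (n + 1)) := by
  intro n
  dsimp only
  rw [prod_Icc_succ_top (by omega), prod_Icc_succ_top (by omega)]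
  linear_combination (norm := module) (∏ k ∈ Icc 1 n, w k) • h (n + 1) (by omega)

end Recurrence

theorem Quaternion.sq_eq_two_re_smul_sub_norm_sq_smul (a : ℍ[ℝ]) :
    a ^ 2 = (2 * a.re) • a - ‖a‖ ^ 2 • 1 := by
  calc a ^ 2 = (a + star a) * a - a * star a := by
        rw [add_mul, star_comm_self', sq, add_sub_cancel_right]
    _ = (2 * a.re) • a - ‖a‖ ^ 2 • 1 := by
      rw [self_add_star', coe_mul_eq_smul, self_mul_star, normSq_eq_norm_mul_self, ← sq,
        ← Algebra.algebraMap_eq_smul_one]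
      rfl

/-- Explicit formula for the coordinates of an `S`-eigenvector of a
backward unilateral weighted shift: if `s ∉ ℝ`, the weights `w_n` (for `n ≥ 1`) are
positive reals, and `|s|²·x_n − 2Re(s)·w_n·x_{n+1} + w_n·w_{n+1}·x_{n+2} = 0` for all
`n ≥ 1`, then for every `n ≥ 2`,
`x_{n+1} = (w₁⋯w_n)⁻¹·((sⁿ − s̄ⁿ)(s − s̄)⁻¹·w₁·x₂ − (sⁿs̄ − s·s̄ⁿ)(s − s̄)⁻¹·x₁)`. -/
theorem weightedShift_sEigenvector_coords (s : ℍ[ℝ])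
    (hs : s ∉ Set.range ((↑) : ℝ → ℍ[ℝ]))
    (w : ℕ → ℝ) (hw : ∀ n, 1 ≤ n → 0 < w n) (x : ℕ → ℍ[ℝ])
    (hrec : ∀ n, 1 ≤ n →
      ((‖s‖ ^ 2 : ℝ) : ℍ[ℝ]) * x n - ((2 * s.re * w n : ℝ) : ℍ[ℝ]) * x (n + 1)
        + ((w n * w (n + 1) : ℝ) : ℍ[ℝ]) * x (n + 2) = 0) :
    ∀ n, 2 ≤ n →
      x (n + 1) = (((∏ k ∈ Finset.Icc 1 n, w k)⁻¹ : ℝ) : ℍ[ℝ]) *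
        ((s ^ n - (star s) ^ n) * (s - star s)⁻¹ * ((w 1 : ℝ) : ℍ[ℝ]) * x 2
          - (s ^ n * star s - s * (star s) ^ n) * (s - star s)⁻¹ * x 1) := by
  have hne : s - star s ≠ 0 := fun h =>
    hs ⟨s.re, (star_eq_self.mp (sub_eq_zero.mp h).symm).symm⟩
  set r := (s - star s)⁻¹
  have hr : (s - star s) * r = 1 := mul_inv_cancel₀ hne
  have hz := isRecurrenceSolution_prod_smul
    fun n hn => by simpa only [coe_mul_eq_smul] using hrec n hn
  have hs_star : (star s) ^ 2 = (2 * s.re) • star s - ‖s‖ ^ 2 • 1 := by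
    simpa using sq_eq_two_re_smul_sub_norm_sq_smul (star s)
  have hf : IsRecurrenceSolution (2 * s.re) (‖s‖ ^ 2) fun n =>
      (s ^ n - (star s) ^ n) * r * ((w 1 : ℝ) : ℍ[ℝ]) * x 2
        - (s ^ n * star s - s * (star s) ^ n) * r * x 1 := by
    simpa only [mul_assoc] using isRecurrenceSolution_binet
      (sq_eq_two_re_smul_sub_norm_sq_smul s) hs_star (r * ((w 1 : ℝ) : ℍ[ℝ]) * x 2) (r * x 1)
  have h₀ : (∏ k ∈ Icc 1 0, w k) • x 1 = (s ^ 0 - (star s) ^ 0) * r * ((w 1 : ℝ) : ℍ[ℝ]) * x 2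
      - (s ^ 0 * star s - s * (star s) ^ 0) * r * x 1 := by
    simp only [pow_zero, one_mul, mul_one, ← neg_sub s, neg_mul, hr]
    simp
  have h₁ : (∏ k ∈ Icc 1 1, w k) • x 2 = (s ^ 1 - (star s) ^ 1) * r * ((w 1 : ℝ) : ℍ[ℝ]) * x 2
      - (s ^ 1 * star s - s * (star s) ^ 1) * r * x 1 := by
    simp [hr, coe_mul_eq_smul]
  have hzf := hz.ext hf h₀ h₁
  intro n _
  rw [← congrFun hzf n, coe_mul_eq_smul, smul_smul, inv_mul_cancel₀, one_smul]
  exact (prod_pos fun k hk => hw k (mem_Icc.mp hk).1).ne'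
end

section
/- Let (w_n)_{n≥1} be a bounded sequence of nonzero quaternions. Define maps T and T̃ on ℓ²(ℕ⁺, ℍ) by (Tx)_n = w_n · x_{n+1} and (T̃x)_n = |w_n| · x_{n+1} for n ≥ 1 (left multiplication by the weight). Then T and T̃ are bounded right linear operators, and they are quaternion unitarily equivalent: there exists a surjective right ℍ-linear isometry X of ℓ²(ℕ⁺, ℍ) with T∘X = X∘T̃. (Every backward unilateral weighted shift is quaternion unitarily equivalent to the one whose weights are the moduli of its weights.) -/
open Quaternion

open scoped ENNReal

/-! Choose unimodular quaternions `u n` with `w n * u (n + 1) = u n * |w n|`, recursively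
`u 1 = 1`, `u (n + 1) = |w n| w n⁻¹ u n`. Left multiplication by `u` commutes with the right
scalar action, so it is a unitary `X` of `ℓ²(ℕ⁺, ℍ)`, and
`(T X x) n = w n u (n + 1) x (n + 1) = u n |w n| x (n + 1) = (X T̃ x) n`. -/

namespace lp

variable {ι κ E R : Type*} {p : ℝ≥0∞}

section Precomp

variable [NormedAddCommGroup E]

theorem _root_.Memℓp.comp_injective {x : ι → E} (hx : Memℓp x p) {e : κ → ι}
    (he : Function.Injective e) : Memℓp (x ∘ e) p := by
  obtain rfl | rfl | hp := p.trichotomy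
  · exact memℓp_zero ((memℓp_zero_iff.1 hx).preimage he.injOn)
  · exact memℓp_infty (hx.bddAbove.mono (Set.range_comp_subset_range e fun i => ‖x i‖))
  · exact memℓp_gen ((hx.summable hp).comp_injective he)

theorem norm_comp_le (hp : p ≠ 0) (x : lp (fun _ : ι => E) p) {e : κ → ι}
    (he : Function.Injective e) :
    ‖(⟨x ∘ e, (lp.memℓp x).comp_injective he⟩ : lp (fun _ : κ => E) p)‖ ≤ ‖x‖ := by
  obtain rfl | rfl | hp := p.trichotomy
  · exact absurd rfl hp
  · exact norm_le_of_forall_le (norm_nonneg' x) fun k => norm_apply_le_norm hp x (e k)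
  · refine norm_le_of_forall_sum_le hp (norm_nonneg' x) fun s => ?_
    calc ∑ k ∈ s, ‖x (e k)‖ ^ p.toReal
        = ∑ i ∈ s.map ⟨e, he⟩, ‖x i‖ ^ p.toReal :=
          (Finset.sum_map s ⟨e, he⟩ fun i => ‖x i‖ ^ p.toReal).symm
      _ ≤ ‖x‖ ^ p.toReal := sum_rpow_le_norm_rpow hp x _

variable [Fact (1 ≤ p)] {𝕜 : Type*} [NormedRing 𝕜] [Module 𝕜 E] [IsBoundedSMul 𝕜 E]

noncomputable def precomp (e : κ → ι) (he : Function.Injective e) :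
    lp (fun _ : ι => E) p →L[𝕜] lp (fun _ : κ => E) p :=
  LinearMap.mkContinuous
    { toFun := fun x => ⟨x ∘ e, (lp.memℓp x).comp_injective he⟩
      map_add' := fun _ _ => rfl
      map_smul' := fun _ _ => rfl }
    1 fun x => (one_mul ‖x‖).symm ▸ norm_comp_le (zero_lt_one.trans_le Fact.out).ne' x he

@[simp]
theorem precomp_apply (e : κ → ι) (he : Function.Injective e) (x : lp (fun _ : ι => E) p)
    (k : κ) : precomp (𝕜 := 𝕜) e he x k = x (e k) := rfl

end Precomp

section MulLeft

variable [NormedRing R]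

theorem _root_.Memℓp.infty_mul_left {a x : ι → R} (ha : Memℓp a ∞) (hx : Memℓp x p) :
    Memℓp (a * x) p := by
  obtain ⟨C, hC⟩ := ha.bddAbove
  refine (hx.norm.const_mul C).mono fun i => ?_
  calc ‖a i * x i‖ ≤ ‖a i‖ * ‖x i‖ := norm_mul_le _ _
    _ ≤ C * ‖x i‖ := by gcongr; exact hC ⟨i, rfl⟩

theorem norm_infty_mul_le (hp : p ≠ 0) (a : lp (fun _ : ι => R) ∞)
    (x : lp (fun _ : ι => R) p) :
    ‖(⟨a * x, (lp.memℓp a).infty_mul_left (lp.memℓp x)⟩ : lp (fun _ : ι => R) p)‖ ≤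
      ‖a‖ * ‖x‖ :=
  calc _ ≤ ‖‖a‖ • lp.toNorm x‖ := norm_mono hp fun i => by
          change ‖a i * x i‖ ≤ ‖‖a‖ * ‖x i‖‖
          rw [Real.norm_of_nonneg (by positivity)]
          exact (norm_mul_le _ _).trans <| by
            gcongr; exact norm_apply_le_norm ENNReal.top_ne_zero a i
    _ = ‖a‖ * ‖x‖ := by rw [norm_const_smul hp, norm_norm, norm_toNorm]

variable [Fact (1 ≤ p)]

noncomputable def mulLeft (a : lp (fun _ : ι => R) ∞) :
    lp (fun _ : ι => R) p →L[Rᵐᵒᵖ] lp (fun _ : ι => R) p :=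
  LinearMap.mkContinuous
    { toFun := fun x => ⟨a * x, (lp.memℓp a).infty_mul_left (lp.memℓp x)⟩
      map_add' := fun x y => lp.ext (mul_add (a : ι → R) x y)
      map_smul' := fun c x => lp.ext (funext fun i => (mul_assoc (a i) (x i) c.unop).symm) }
    ‖a‖ (norm_infty_mul_le (zero_lt_one.trans_le Fact.out).ne' a)

@[simp]
theorem mulLeft_apply (a : lp (fun _ : ι => R) ∞) (x : lp (fun _ : ι => R) p) (i : ι) :
    mulLeft a x i = a i * x i := rfl

end MulLeft

section Unitary

variable [NormedDivisionRing R] [Fact (1 ≤ p)]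

theorem norm_mulLeft_of_norm_eq_one {u : lp (fun _ : ι => R) ∞} (hu : ∀ i, ‖u i‖ = 1)
    (x : lp (fun _ : ι => R) p) : ‖mulLeft u x‖ = ‖x‖ := by
  have hp : p ≠ 0 := (zero_lt_one.trans_le Fact.out).ne'
  have h i : ‖mulLeft u x i‖ = ‖x i‖ := by rw [mulLeft_apply, norm_mul, hu, one_mul]
  exact le_antisymm (norm_mono hp fun i => (h i).le) (norm_mono hp fun i => (h i).ge)

theorem _root_.Memℓp.infty_of_norm_eq_one {u : ι → R} (hu : ∀ i, ‖u i‖ = 1) : Memℓp u ∞ :=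
  memℓp_infty ⟨1, Set.forall_mem_range.2 fun i => (hu i).le⟩

noncomputable def mulLeftIsometryEquiv (u : ι → R) (hu : ∀ i, ‖u i‖ = 1) :
    lp (fun _ : ι => R) p ≃ₗᵢ[Rᵐᵒᵖ] lp (fun _ : ι => R) p :=
  have hu0 i : u i ≠ 0 := norm_ne_zero_iff.1 ((hu i).symm ▸ one_ne_zero)
  have hu' i : ‖(u i)⁻¹‖ = 1 := by rw [norm_inv, hu, inv_one]
  { toLinearMap := (mulLeft (p := p) ⟨u, .infty_of_norm_eq_one hu⟩).toLinearMap
    invFun := mulLeft ⟨fun i => (u i)⁻¹, .infty_of_norm_eq_one hu'⟩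
    left_inv x := lp.ext (funext fun i => inv_mul_cancel_left₀ (hu0 i) (x i))
    right_inv x := lp.ext (funext fun i => mul_inv_cancel_left₀ (hu0 i) (x i))
    norm_map' := norm_mulLeft_of_norm_eq_one hu }

@[simp]
theorem mulLeftIsometryEquiv_apply (u : ι → R) (hu : ∀ i, ‖u i‖ = 1)
    (x : lp (fun _ : ι => R) p) (i : ι) : mulLeftIsometryEquiv u hu x i = u i * x i := rfl

end Unitary

end lp

section Phase

variable {R : Type*} [NormedDivisionRing R] [NormedAlgebra ℝ R] (w : ℕ+ → R)

def weightPhase (n : ℕ+) : R :=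
  n.recOn 1 fun k u => ‖w k‖ • ((w k)⁻¹ * u)

@[simp]
theorem weightPhase_one : weightPhase w 1 = 1 :=
  PNat.recOn_one _ _

theorem weightPhase_succ (n : ℕ+) :
    weightPhase w (n + 1) = ‖w n‖ • ((w n)⁻¹ * weightPhase w n) :=
  PNat.recOn_succ _ _ _

variable {w}

theorem norm_weightPhase (hw : ∀ n, w n ≠ 0) (n : ℕ+) : ‖weightPhase w n‖ = 1 := by
  induction n using PNat.recOn with
  | one => simp
  | succ n ih =>
    rw [weightPhase_succ, norm_smul, norm_mul, norm_inv, ih, norm_norm, mul_one,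
      mul_inv_cancel₀ (norm_ne_zero_iff.2 (hw n))]

theorem mul_weightPhase_succ {n : ℕ+} (hn : w n ≠ 0) :
    w n * weightPhase w (n + 1) = ‖w n‖ • weightPhase w n := by
  rw [weightPhase_succ, mul_smul_comm, mul_inv_cancel_left₀ hn]

end Phase

/-- Every backward unilateral weighted shift on `ℓ²(ℕ⁺, ℍ)` with bounded
nonzero quaternionic weights `(w_n)` is a bounded right linear operator, and it is
quaternion unitarily equivalent to the backward unilateral weighted shift whose weights
are the moduli `(|w_n|)`. -/
theorem weightedShift_unitarilyEquiv_modulusShift (w : ℕ+ → ℍ[ℝ])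
    (hw0 : ∀ n, w n ≠ 0) (hwb : ∃ C : ℝ, ∀ n, ‖w n‖ ≤ C) :
    ∃ T Tt : lp (fun _ : ℕ+ => ℍ[ℝ]) 2 →L[ℍ[ℝ]ᵐᵒᵖ] lp (fun _ : ℕ+ => ℍ[ℝ]) 2,
      (∀ (x : lp (fun _ : ℕ+ => ℍ[ℝ]) 2) (n : ℕ+), T x n = w n * x (n + 1)) ∧
      (∀ (x : lp (fun _ : ℕ+ => ℍ[ℝ]) 2) (n : ℕ+),
        Tt x n = ((‖w n‖ : ℝ) : ℍ[ℝ]) * x (n + 1)) ∧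
      ∃ X : lp (fun _ : ℕ+ => ℍ[ℝ]) 2 ≃ₗᵢ[ℍ[ℝ]ᵐᵒᵖ] lp (fun _ : ℕ+ => ℍ[ℝ]) 2,
        ∀ x, T (X x) = X (Tt x) := by
  obtain ⟨C, hC⟩ := hwb
  have hw : Memℓp w ∞ := memℓp_infty ⟨C, Set.forall_mem_range.2 hC⟩
  have hw_abs : Memℓp (fun n => ((‖w n‖ : ℝ) : ℍ[ℝ])) ∞ :=
    hw.mono' fun n => by rw [Quaternion.norm_coe, norm_norm]
  let S := lp.precomp (E := ℍ[ℝ]) (𝕜 := ℍ[ℝ]ᵐᵒᵖ) (p := 2) (· + 1 : ℕ+ → ℕ+)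
    (add_left_injective 1)
  refine ⟨lp.mulLeft ⟨w, hw⟩ ∘L S, lp.mulLeft ⟨_, hw_abs⟩ ∘L S, fun _ _ => rfl, fun _ _ => rfl,
    lp.mulLeftIsometryEquiv _ (norm_weightPhase hw0), fun x => lp.ext (funext fun n => ?_)⟩
  simp only [ContinuousLinearMap.comp_apply, lp.mulLeftIsometryEquiv_apply, lp.mulLeft_apply,
    S, lp.precomp_apply]
  rw [← mul_assoc, mul_weightPhase_succ (hw0 n), coe_mul_eq_smul, smul_mul_assoc, mul_smul_comm]
end

section
/- Let (w_n)_{n≥1} be a bounded sequence of positive real numbers, let T be the backward unilateral weighted shift on ℓ²(ℕ⁺, ℍ) given by (Tx)_n = w_n·x_{n+1}, and set r = liminf_{n→∞} (w₁w₂⋯w_n)^{1/n}. If s ∈ ℍ ∖ ℝ satisfies |s| < r, then the solution set V_s = {x ∈ ℓ²(ℕ⁺, ℍ) : T(Tx) − (Tx)•(2Re(s)) + x•|s|² = 0} is a right ℍ-submodule of ℓ²(ℕ⁺, ℍ) whose dimension over ℍ (rank as ℍᵐᵒᵖ-module) equals 2. -/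
open Quaternion MulOpposite Filter

/-!
Coordinatewise, `Q_s(T) x = 0` is the recurrence
`w_n w_{n+1} x_{n+2} - 2 Re(s) w_n x_{n+1} + |s|² x_n = 0`; as the weights do not vanish, a
solution is determined by `(x_1, x_2)`, so evaluation at the first two coordinates embeds `V_s`
into `ℍ²`. Both `s` and `s̄` are roots of `X² - 2 Re(s) X + |s|²`, and a root `g` gives the
solution `x_n = g^{n-1} / (w_1 ⋯ w_{n-1})`, which is square summable because
`|g| = |s| < liminf (w_1 ⋯ w_n)^{1/n}`. Since `s ≠ s̄` for non-real `s`, right `ℍ`-combinations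
of these two solutions reach every initial pair (a `2 × 2` Vandermonde system), so `V_s ≅ ℍ²`.
-/

open Finset

local notation "ℓ²ℍ" => lp (fun _ : ℕ+ => ℍ[ℝ]) 2

theorem exists_add_eq_and_mul_add_mul_eq {D : Type*} [DivisionRing D] {p q : D} (hpq : p ≠ q)
    (u v : D) : ∃ a b, a + b = u ∧ p * a + q * b = v := by
  set a := (p - q)⁻¹ * (v - q * u)
  refine ⟨a, u - a, add_sub_cancel a u, ?_⟩
  calc p * a + q * (u - a) = (p - q) * a + q * u := by noncomm_ring
    _ = v := by rw [← mul_assoc, mul_inv_cancel₀ (sub_ne_zero.2 hpq), one_mul, sub_add_cancel]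

theorem rank_mulOpposite_self (R : Type*) [DivisionRing R] : Module.rank Rᵐᵒᵖ R = 1 := by
  rw [(opLinearEquiv Rᵐᵒᵖ : R ≃ₗ[Rᵐᵒᵖ] Rᵐᵒᵖ).rank_eq, Module.rank_self]

theorem Finset.prod_Icc_one_pnat {M : Type*} [CommMonoid M] (f : ℕ+ → M) (n : ℕ+) :
    ∏ k ∈ Icc 1 n, f k = ∏ i ∈ range n, f i.succPNat := by
  refine prod_nbij' PNat.natPred Nat.succPNat (fun k hk => ?_) (fun i hi => ?_)
    (fun k _ => k.succPNat_natPred) (fun i _ => i.natPred_succPNat) (fun k _ => by simp)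
  · have hkn : (k : ℕ) ≤ n := (mem_Icc.1 hk).2
    rw [mem_range, PNat.natPred]
    have := k.pos
    omega
  · rw [mem_range] at hi
    exact mem_Icc.2 ⟨one_le, by rw [← PNat.coe_le_coe]; simpa⟩

namespace Quaternion

theorem mul_self_sub_two_re_smul_add_norm_sq_smul (q : ℍ[ℝ]) :
    q * q - (2 * q.re) • q + (‖q‖ ^ 2) • (1 : ℍ[ℝ]) = 0 := by
  rw [← coe_mul_eq_smul, ← coe_mul_eq_smul, mul_one, sq, ← normSq_eq_norm_mul_self,
    ← self_add_star', ← star_mul_self]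
  noncomm_ring

theorem star_ne_self_of_notMem_range_coe {s : ℍ[ℝ]} (hs : s ∉ Set.range ((↑) : ℝ → ℍ[ℝ])) :
    star s ≠ s :=
  fun h => hs ⟨s.re, (star_eq_self.1 h).symm⟩

end Quaternion

section WeightedRecurrence

variable {K : Type*} [Field K] (v : ℕ → K)

theorem eq_zero_of_weighted_recurrence {M : Type*} [AddCommGroup M] [Module K M] {a b : K}
    {y : ℕ → M} (hv : ∀ k, v k ≠ 0)
    (hy : ∀ k, v k • v (k + 1) • y (k + 2) - a • v k • y (k + 1) + b • y k = 0)
    (h0 : y 0 = 0) (h1 : y 1 = 0) (k : ℕ) : y k = 0 := by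
  suffices ∀ k, y k = 0 ∧ y (k + 1) = 0 from (this k).1
  intro k
  induction k with
  | zero => exact ⟨h0, h1⟩
  | succ k ih =>
    refine ⟨ih.2, ?_⟩
    simpa [ih.1, ih.2, hv] using hy k

variable {A : Type*} [Ring A] [Algebra K A]

def weightedShiftEigenseq (g : A) (k : ℕ) : A := (∏ i ∈ range k, v i)⁻¹ • g ^ k

@[simp]
theorem weightedShiftEigenseq_zero (g : A) : weightedShiftEigenseq v g 0 = 1 := by
  simp [weightedShiftEigenseq]

@[simp]
theorem weightedShiftEigenseq_one (g : A) : weightedShiftEigenseq v g 1 = (v 0)⁻¹ • g := by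
  simp [weightedShiftEigenseq]

theorem smul_weightedShiftEigenseq_succ (hv : ∀ k, v k ≠ 0) (g : A) (k : ℕ) :
    v k • weightedShiftEigenseq v g (k + 1) = g * weightedShiftEigenseq v g k := by
  rw [weightedShiftEigenseq, weightedShiftEigenseq, prod_range_succ, mul_inv, smul_smul,
    mul_left_comm, mul_inv_cancel₀ (hv k), mul_one, mul_smul_comm, pow_succ']

theorem weightedShiftEigenseq_recurrence (hv : ∀ k, v k ≠ 0) {a b : K} {g : A}
    (hg : g * g - a • g + b • (1 : A) = 0) (k : ℕ) :
    v k • v (k + 1) • weightedShiftEigenseq v g (k + 2)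
      - a • v k • weightedShiftEigenseq v g (k + 1) + b • weightedShiftEigenseq v g k = 0 := by
  rw [smul_weightedShiftEigenseq_succ v hv, ← mul_smul_comm, smul_weightedShiftEigenseq_succ v hv,
    ← mul_assoc, ← smul_mul_assoc, ← smul_one_mul b (weightedShiftEigenseq v g k), ← sub_mul,
    ← add_mul, hg, zero_mul]

end WeightedRecurrence

section Summable

variable {A : Type*} [NormedDivisionRing A] [NormedAlgebra ℝ A] {v : ℕ → ℝ}

theorem norm_weightedShiftEigenseq (hv : ∀ k, 0 < v k) (g : A) (k : ℕ) :
    ‖weightedShiftEigenseq v g k‖ = ‖g‖ ^ k / ∏ i ∈ range k, v i := by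
  rw [weightedShiftEigenseq, norm_smul, norm_pow, norm_inv,
    Real.norm_of_nonneg (prod_nonneg fun i _ => (hv i).le), inv_mul_eq_div]

theorem summable_sq_norm_weightedShiftEigenseq (hv : ∀ k, 0 < v k) {g : A} {ρ : ℝ}
    (hgρ : ‖g‖ < ρ) (hρ : ∀ᶠ k in atTop, ρ ^ k ≤ ∏ i ∈ range k, v i) :
    Summable fun k => ‖weightedShiftEigenseq v g k‖ ^ 2 := by
  have hρ0 : 0 < ρ := (norm_nonneg g).trans_lt hgρ
  have hratio : (‖g‖ / ρ) ^ 2 < 1 := by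
    rw [sq_lt_one_iff₀ (by positivity)]
    exact (div_lt_one hρ0).2 hgρ
  refine .of_norm_bounded_eventually_nat (summable_geometric_of_lt_one (by positivity) hratio) ?_
  filter_upwards [hρ] with k hk
  calc ‖‖weightedShiftEigenseq v g k‖ ^ 2‖ = (‖g‖ ^ k / ∏ i ∈ range k, v i) ^ 2 := by
        rw [norm_pow, norm_norm, norm_weightedShiftEigenseq hv]
    _ ≤ (‖g‖ ^ k / ρ ^ k) ^ 2 := by
        have hπ : 0 < ∏ i ∈ range k, v i := prod_pos fun i _ => hv i
        gcongr
    _ = ((‖g‖ / ρ) ^ 2) ^ k := by ring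

end Summable

theorem exists_lt_eventually_pow_le_of_lt_liminf {p : ℕ → ℝ} (hp : ∀ n, 0 ≤ p n) {c : ℝ}
    (hc : 0 ≤ c) (h : c < liminf (fun n : ℕ+ => p n ^ ((n : ℕ) : ℝ)⁻¹) atTop) :
    ∃ ρ, c < ρ ∧ ∀ᶠ k in atTop, ρ ^ k ≤ p k := by
  obtain ⟨ρ, hcρ, hρ⟩ := exists_between h
  obtain ⟨N, hN⟩ := eventually_atTop.1 <| eventually_lt_of_lt_liminf hρ <|
    isBoundedUnder_of ⟨0, fun n => Real.rpow_nonneg (hp n) _⟩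
  refine ⟨ρ, hcρ, eventually_atTop.2 ⟨N, fun k hk => ?_⟩⟩
  have hk0 : 0 < k := N.pos.trans_le hk
  calc ρ ^ k ≤ (p k ^ (k : ℝ)⁻¹) ^ k :=
        pow_le_pow_left₀ (hc.trans hcρ.le) (hN ⟨k, hk0⟩ hk).le k
    _ = p k := Real.rpow_inv_natCast_pow (hp k) hk0.ne'

theorem lp.op_coe_smul {α : Type*} {p : ENNReal} [Fact (1 ≤ p)] (r : ℝ)
    (x : lp (fun _ : α => ℍ[ℝ]) p) : op (r : ℍ[ℝ]) • x = r • x :=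
  lp.ext <| funext fun n => by simp [Quaternion.mul_coe_eq_smul]

/-- `ker Q_s(T)`; the coefficients of `Q_s(T)` are real, hence central, so it is again right
`ℍ`-linear. -/
noncomputable def sEigenspace (T : ℓ²ℍ →L[ℍ[ℝ]ᵐᵒᵖ] ℓ²ℍ) (s : ℍ[ℝ]) : Submodule ℍ[ℝ]ᵐᵒᵖ ℓ²ℍ :=
  LinearMap.ker (T * T - (2 * s.re) • T + (‖s‖ ^ 2) • 1 : ℓ²ℍ →L[ℍ[ℝ]ᵐᵒᵖ] ℓ²ℍ).toLinearMap

theorem mem_sEigenspace_iff (T : ℓ²ℍ →L[ℍ[ℝ]ᵐᵒᵖ] ℓ²ℍ) (s : ℍ[ℝ]) (x : ℓ²ℍ) :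
    x ∈ sEigenspace T s ↔ T (T x) - (2 * s.re) • T x + (‖s‖ ^ 2) • x = 0 := by
  simp [sEigenspace]

theorem coe_sEigenspace (T : ℓ²ℍ →L[ℍ[ℝ]ᵐᵒᵖ] ℓ²ℍ) (s : ℍ[ℝ]) :
    (sEigenspace T s : Set ℓ²ℍ) =
      {x | T (T x) - op ((2 * s.re : ℝ) : ℍ[ℝ]) • T x + op ((‖s‖ ^ 2 : ℝ) : ℍ[ℝ]) • x = 0} := by
  ext x
  simp only [SetLike.mem_coe, mem_sEigenspace_iff, lp.op_coe_smul, Set.mem_ofPred_eq]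

section WeightedShift

variable {w : ℕ+ → ℝ} {T : ℓ²ℍ →L[ℍ[ℝ]ᵐᵒᵖ] ℓ²ℍ}

theorem mem_sEigenspace_iff_of_weightedShift
    (hT : ∀ (x : ℓ²ℍ) (n : ℕ+), T x n = ((w n : ℝ) : ℍ[ℝ]) * x (n + 1)) (s : ℍ[ℝ]) (x : ℓ²ℍ) :
    x ∈ sEigenspace T s ↔ ∀ k : ℕ,
      (w ∘ Nat.succPNat) k • (w ∘ Nat.succPNat) (k + 1) • (x ∘ Nat.succPNat) (k + 2)
        - (2 * s.re) • (w ∘ Nat.succPNat) k • (x ∘ Nat.succPNat) (k + 1)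
        + ‖s‖ ^ 2 • (x ∘ Nat.succPNat) k = 0 := by
  rw [mem_sEigenspace_iff, lp.ext_iff, funext_iff, ← Equiv.pnatEquivNat.symm.forall_congr_right]
  refine forall_congr' fun k => ?_
  simp only [lp.coeFn_add, lp.coeFn_sub, lp.coeFn_smul, lp.coeFn_zero, Pi.add_apply,
    Pi.sub_apply, Pi.smul_apply, Pi.zero_apply, hT, coe_mul_eq_smul]
  rfl

theorem eq_zero_of_mem_sEigenspace (hw : ∀ n, 0 < w n)
    (hT : ∀ (x : ℓ²ℍ) (n : ℕ+), T x n = ((w n : ℝ) : ℍ[ℝ]) * x (n + 1)) {s : ℍ[ℝ]} {x : ℓ²ℍ}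
    (hx : x ∈ sEigenspace T s) (h1 : x 1 = 0) (h2 : x 2 = 0) : x = 0 :=
  lp.ext <| funext fun n => by
    simpa using eq_zero_of_weighted_recurrence (w ∘ Nat.succPNat) (fun k => (hw _).ne')
      ((mem_sEigenspace_iff_of_weightedShift hT s x).1 hx) h1 h2 n.natPred

theorem exists_mem_sEigenspace_apply_one_apply_two (hw : ∀ n, 0 < w n)
    (hT : ∀ (x : ℓ²ℍ) (n : ℕ+), T x n = ((w n : ℝ) : ℍ[ℝ]) * x (n + 1)) {s g : ℍ[ℝ]}
    (hg : g * g - (2 * s.re) • g + (‖s‖ ^ 2) • (1 : ℍ[ℝ]) = 0) {ρ : ℝ} (hgρ : ‖g‖ < ρ)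
    (hρ : ∀ᶠ k in atTop, ρ ^ k ≤ ∏ i ∈ range k, w i.succPNat) :
    ∃ x ∈ sEigenspace T s, x 1 = 1 ∧ x 2 = (w 1)⁻¹ • g := by
  let e := weightedShiftEigenseq (w ∘ Nat.succPNat) g
  have he : Memℓp (fun n : ℕ+ => e n.natPred) 2 := by
    rw [memℓp_gen_iff (by norm_num), ENNReal.toReal_ofNat]
    simp_rw [Real.rpow_two]
    refine summable_pnat_iff_summable_succ (f := fun k => ‖e (k - 1)‖ ^ 2) |>.2 ?_
    simp only [add_tsub_cancel_right]
    exact summable_sq_norm_weightedShiftEigenseq (fun k => hw _) hgρ hρ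
  refine ⟨⟨_, he⟩, (mem_sEigenspace_iff_of_weightedShift hT s _).2 fun k => ?_,
    weightedShiftEigenseq_zero _ g, weightedShiftEigenseq_one _ g⟩
  exact weightedShiftEigenseq_recurrence _ (fun k => (hw _).ne') hg k

theorem rank_sEigenspace_of_weightedShift (hw : ∀ n, 0 < w n)
    (hT : ∀ (x : ℓ²ℍ) (n : ℕ+), T x n = ((w n : ℝ) : ℍ[ℝ]) * x (n + 1)) {s : ℍ[ℝ]}
    (hs : star s ≠ s) {ρ : ℝ} (hsρ : ‖s‖ < ρ)
    (hρ : ∀ᶠ k in atTop, ρ ^ k ≤ ∏ i ∈ range k, w i.succPNat) :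
    Module.rank ℍ[ℝ]ᵐᵒᵖ (sEigenspace T s) = 2 := by
  let ev : sEigenspace T s →ₗ[ℍ[ℝ]ᵐᵒᵖ] ℍ[ℝ] × ℍ[ℝ] :=
    ((lp.evalₗ _ 2 1).prod (lp.evalₗ _ 2 2)).comp (sEigenspace T s).subtype
  have hinj : Function.Injective ev := by
    rw [← LinearMap.ker_eq_bot, LinearMap.ker_eq_bot']
    rintro ⟨x, hx⟩ h
    obtain ⟨h1, h2⟩ := Prod.ext_iff.1 h
    exact Subtype.ext (eq_zero_of_mem_sEigenspace hw hT hx h1 h2)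
  have hsurj : Function.Surjective ev := by
    rintro ⟨u, v⟩
    obtain ⟨x, hx, hx1, hx2⟩ := exists_mem_sEigenspace_apply_one_apply_two hw hT
      (mul_self_sub_two_re_smul_add_norm_sq_smul s) hsρ hρ
    obtain ⟨y, hy, hy1, hy2⟩ := exists_mem_sEigenspace_apply_one_apply_two hw hT
      (by simpa using mul_self_sub_two_re_smul_add_norm_sq_smul (star s))
      (by rwa [norm_star]) hρ
    obtain ⟨a, b, hab, hab'⟩ := exists_add_eq_and_mul_add_mul_eq hs.symm u (w 1 • v)
    refine ⟨⟨op a • x + op b • y, add_mem (Submodule.smul_mem _ _ hx) (Submodule.smul_mem _ _ hy)⟩,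
      Prod.ext ?_ ?_⟩
    · change x 1 * a + y 1 * b = u
      rw [hx1, hy1, one_mul, one_mul, hab]
    · change x 2 * a + y 2 * b = v
      rw [hx2, hy2, smul_mul_assoc, smul_mul_assoc, ← smul_add, hab', inv_smul_smul₀ (hw 1).ne']
  rw [(LinearEquiv.ofBijective ev ⟨hinj, hsurj⟩).rank_eq, rank_prod', rank_mulOpposite_self]
  exact one_add_one_eq_two

end WeightedShift

theorem weightedShift_sEigenspace_rank_two_general (w : ℕ+ → ℝ) (hw : ∀ n, 0 < w n)
    (T : lp (fun _ : ℕ+ => ℍ[ℝ]) 2 →L[ℍ[ℝ]ᵐᵒᵖ] lp (fun _ : ℕ+ => ℍ[ℝ]) 2)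
    (hT : ∀ (x : lp (fun _ : ℕ+ => ℍ[ℝ]) 2) (n : ℕ+), T x n = ((w n : ℝ) : ℍ[ℝ]) * x (n + 1))
    (s : ℍ[ℝ]) (hs : s ∉ Set.range ((↑) : ℝ → ℍ[ℝ]))
    (hsr : ‖s‖ <
      liminf (fun n : ℕ+ => (∏ k ∈ Finset.Icc 1 n, w k) ^ (((n : ℕ) : ℝ)⁻¹)) atTop) :
    ∃ V : Submodule ℍ[ℝ]ᵐᵒᵖ (lp (fun _ : ℕ+ => ℍ[ℝ]) 2),
      (V : Set (lp (fun _ : ℕ+ => ℍ[ℝ]) 2)) =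
        {x | T (T x) - op ((2 * s.re : ℝ) : ℍ[ℝ]) • T x
              + op ((‖s‖ ^ 2 : ℝ) : ℍ[ℝ]) • x = 0} ∧
      Module.rank ℍ[ℝ]ᵐᵒᵖ V = 2 := by
  simp_rw [prod_Icc_one_pnat] at hsr
  obtain ⟨ρ, hsρ, hρ⟩ := exists_lt_eventually_pow_le_of_lt_liminf
    (p := fun k => ∏ i ∈ range k, w i.succPNat) (fun k => prod_nonneg fun i _ => (hw _).le)
    (norm_nonneg s) hsr
  exact ⟨sEigenspace T s, coe_sEigenspace T s,
    rank_sEigenspace_of_weightedShift hw hT (star_ne_self_of_notMem_range_coe hs) hsρ hρ⟩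

/-- For a backward unilateral weighted shift `T` on `ℓ²(ℕ⁺, ℍ)` with
bounded positive real weights, and `s ∈ ℍ ∖ ℝ` with `‖s‖ < liminf (w₁⋯w_n)^{1/n}`, the
solution set of `Q_s(T) x = 0` is a right `ℍ`-submodule of dimension `2` over `ℍ`. -/
theorem weightedShift_sEigenspace_rank_two (w : ℕ+ → ℝ) (hw : ∀ n, 0 < w n)
    (hwb : ∃ C : ℝ, ∀ n, w n ≤ C)
    (T : lp (fun _ : ℕ+ => ℍ[ℝ]) 2 →L[ℍ[ℝ]ᵐᵒᵖ] lp (fun _ : ℕ+ => ℍ[ℝ]) 2)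
    (hT : ∀ (x : lp (fun _ : ℕ+ => ℍ[ℝ]) 2) (n : ℕ+), T x n = ((w n : ℝ) : ℍ[ℝ]) * x (n + 1))
    (s : ℍ[ℝ]) (hs : s ∉ Set.range ((↑) : ℝ → ℍ[ℝ]))
    (hsr : ‖s‖ <
      liminf (fun n : ℕ+ => (∏ k ∈ Finset.Icc 1 n, w k) ^ (((n : ℕ) : ℝ)⁻¹)) atTop) :
    ∃ V : Submodule ℍ[ℝ]ᵐᵒᵖ (lp (fun _ : ℕ+ => ℍ[ℝ]) 2),
      (V : Set (lp (fun _ : ℕ+ => ℍ[ℝ]) 2)) =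
        {x | T (T x) - op ((2 * s.re : ℝ) : ℍ[ℝ]) • T x
              + op ((‖s‖ ^ 2 : ℝ) : ℍ[ℝ]) • x = 0} ∧
      Module.rank ℍ[ℝ]ᵐᵒᵖ V = 2 :=
  weightedShift_sEigenspace_rank_two_general w hw T hT s hs hsr
end

section
/- Let (w_n)_{n≥1} be a bounded sequence of positive real numbers, let T be the backward unilateral weighted shift on ℓ²(ℕ⁺, ℍ) given by (Tx)_n = w_n·x_{n+1}, and set r = liminf_{n→∞} (w₁w₂⋯w_n)^{1/n}. If s ∈ ℍ satisfies |s| > r, then the only x ∈ ℓ²(ℕ⁺, ℍ) with T(Tx) − (Tx)•(2Re(s)) + x•|s|² = 0 is x = 0; that is, s does not belong to the S-point spectrum of T. Consequently the S-point spectrum radius of T equals r. -/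
open Quaternion MulOpposite Filter

/-!
Put `B k = w₁ ⋯ w_k` and let `Q_s(T)x = 0`. Then `Y k = B k • x_{k+1}` satisfies
`Y_{k+2} = (s + s̄) Y_{k+1} - s̄ s Y_k`, hence `Y_{k+1} - s Y_k = s̄ᵏ (Y_1 - s Y_0)`. Either this
vanishes and `Y_k = sᵏ Y_0`, or it has norm `|s|ᵏ ‖Y_1 - s Y_0‖`; so for `x ≠ 0` we get
`‖Y_k‖ + ‖Y_{k+1}‖ ≥ c |s|ᵏ`. As `‖Y_k‖ ≤ B k ‖x‖` and the weights are bounded, `B k ≥ c' |s|ᵏ`,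
which forces `|s| ≤ liminf (B k)^{1/k} = r`.

Conversely, for `0 ≤ t < r` (and for `t = 0`) the vector `v_n = t^{n-1} / B (n-1)` is
square-summable by comparison with a geometric series, and `T v = v t`, so `Q_t(T)v = 0`.
-/

theorem PNat.prod_Icc_one_eq_prod_range {M : Type*} [CommMonoid M] (f : ℕ+ → M) (n : ℕ+) :
    ∏ k ∈ Finset.Icc 1 n, f k = ∏ i ∈ Finset.range n, f i.succPNat := by
  refine Finset.prod_nbij' PNat.natPred Nat.succPNat ?_ ?_ (fun a _ => a.succPNat_natPred)
    (fun i _ => i.natPred_succPNat) (fun a _ => by rw [a.succPNat_natPred]) <;>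
  · intro a ha
    simp only [Finset.mem_Icc, Finset.mem_range, ← PNat.coe_le_coe, PNat.natPred, PNat.one_coe,
      Nat.succPNat_coe] at ha ⊢
    omega

theorem PNat.liminf_comp_val {β : Type*} [ConditionallyCompleteLattice β] (f : ℕ → β) :
    liminf (fun n : ℕ+ => f n) atTop = liminf f atTop := by
  rw [← Function.comp_def, liminf_comp]
  exact congrArg (liminf f) (map_val_Ioi_atTop 0)

theorem PNat.liminf_prod_Icc_rpow_inv (w : ℕ+ → ℝ) :
    liminf (fun n : ℕ+ => (∏ k ∈ Finset.Icc 1 n, w k) ^ (((n : ℕ) : ℝ)⁻¹)) atTop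
      = liminf (fun k : ℕ => (∏ i ∈ Finset.range k, w i.succPNat) ^ (k : ℝ)⁻¹) atTop := by
  simp_rw [PNat.prod_Icc_one_eq_prod_range]
  exact PNat.liminf_comp_val fun k => (∏ i ∈ Finset.range k, w i.succPNat) ^ (k : ℝ)⁻¹

theorem lt_rpow_natCast_inv_iff {x y : ℝ} {k : ℕ} (hx : 0 ≤ x) (hy : 0 ≤ y) (hk : k ≠ 0) :
    x < y ^ (k : ℝ)⁻¹ ↔ x ^ k < y := by
  rw [Real.lt_rpow_inv_iff_of_pos hx hy (by positivity), Real.rpow_natCast]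

theorem isBoundedUnder_le_prod_range_rpow_inv {W : ℕ → ℝ} {C : ℝ} (hW : ∀ k, 0 ≤ W k)
    (hC : ∀ k, W k ≤ C) :
    IsBoundedUnder (· ≤ ·) atTop fun k => (∏ i ∈ Finset.range k, W i) ^ (k : ℝ)⁻¹ := by
  refine isBoundedUnder_of_eventually_le (a := C) ((eventually_ne_atTop 0).mono fun k hk => ?_)
  rw [Real.rpow_inv_le_iff_of_pos (Finset.prod_nonneg fun i _ => hW i) ((hW 0).trans (hC 0))
    (by positivity), Real.rpow_natCast]
  calc ∏ i ∈ Finset.range k, W i ≤ ∏ _i ∈ Finset.range k, C :=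
        Finset.prod_le_prod (fun i _ => hW i) fun i _ => hC i
    _ = C ^ k := by rw [Finset.prod_const, Finset.card_range]

theorem le_liminf_rpow_inv_of_mul_pow_le {a : ℕ → ℝ} {c m : ℝ} (hc : 0 < c) (hm : 0 ≤ m)
    (ha : ∀ k, c * m ^ k ≤ a k) (hbdd : IsBoundedUnder (· ≤ ·) atTop fun k => a k ^ (k : ℝ)⁻¹) :
    m ≤ liminf (fun k => a k ^ (k : ℝ)⁻¹) atTop := by
  have ha0 : ∀ k, 0 ≤ a k := fun k => (by positivity : 0 ≤ c * m ^ k).trans (ha k)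
  rw [le_liminf_iff hbdd.isCoboundedUnder_ge
    (isBoundedUnder_of ⟨0, fun k => Real.rpow_nonneg (ha0 k) _⟩)]
  intro ρ hρm
  rcases lt_or_ge ρ 0 with hρ | hρ
  · exact Eventually.of_forall fun k => hρ.trans_le (Real.rpow_nonneg (ha0 k) _)
  have hm0 : 0 < m := hρ.trans_lt hρm
  have hsmall : ∀ᶠ k in atTop, (ρ / m) ^ k < c :=
    (tendsto_pow_atTop_nhds_zero_of_lt_one (div_nonneg hρ hm0.le)
      ((div_lt_one hm0).mpr hρm)).eventually (gt_mem_nhds hc)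
  filter_upwards [hsmall, eventually_ne_atTop 0] with k hk hk0
  rw [lt_rpow_natCast_inv_iff hρ (ha0 k) hk0]
  calc ρ ^ k = (ρ / m) ^ k * m ^ k := by rw [div_pow, div_mul_cancel₀ _ (by positivity)]
    _ < c * m ^ k := by gcongr
    _ ≤ a k := ha k

theorem summable_sq_pow_div_of_lt_liminf {a : ℕ → ℝ} {t : ℝ} (ht : 0 ≤ t) (ha : ∀ k, 0 ≤ a k)
    (htr : t < liminf (fun k => a k ^ (k : ℝ)⁻¹) atTop) :
    Summable fun k => (t ^ k / a k) ^ 2 := by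
  obtain ⟨ρ, htρ, hρr⟩ := exists_between htr
  have hρ : 0 < ρ := ht.trans_lt htρ
  have hgrowth : ∀ᶠ k in atTop, ρ < a k ^ (k : ℝ)⁻¹ :=
    eventually_lt_of_lt_liminf hρr (isBoundedUnder_of ⟨0, fun k => Real.rpow_nonneg (ha k) _⟩)
  refine Summable.of_norm_bounded_eventually_nat (g := fun k => ((t / ρ) ^ 2) ^ k)
    (summable_geometric_of_lt_one (by positivity)
      (pow_lt_one₀ (by positivity) ((div_lt_one hρ).mpr htρ) two_ne_zero)) ?_
  filter_upwards [hgrowth, eventually_ne_atTop 0] with k hk hk0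
  rw [lt_rpow_natCast_inv_iff hρ.le (ha k) hk0] at hk
  rw [Real.norm_eq_abs, abs_of_nonneg (sq_nonneg _), ← pow_mul, mul_comm, pow_mul, div_pow t]
  have : 0 ≤ t ^ k / a k := div_nonneg (pow_nonneg ht k) (ha k)
  gcongr

theorem prod_range_smul_recurrence {E : Type*} [AddCommGroup E] [Module ℝ E] {W : ℕ → ℝ}
    {ξ : ℕ → E} {p q : ℝ}
    (h : ∀ k, W k • W (k + 1) • ξ (k + 2) - p • W k • ξ (k + 1) + q • ξ k = 0) (k : ℕ) :
    (∏ i ∈ Finset.range (k + 2), W i) • ξ (k + 2)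
      = p • (∏ i ∈ Finset.range (k + 1), W i) • ξ (k + 1)
        - q • (∏ i ∈ Finset.range k, W i) • ξ k := by
  rw [Finset.prod_range_succ, Finset.prod_range_succ]
  linear_combination (norm := module) (∏ i ∈ Finset.range k, W i) • h k

theorem exists_pos_mul_pow_le_norm_add_norm {R : Type*} [NormedDivisionRing R] {u v : R}
    (huv : ‖v‖ = ‖u‖) {Y : ℕ → R} (hY : ∀ k, Y (k + 2) = (u + v) * Y (k + 1) - v * u * Y k)
    (hne : ∃ k, Y k ≠ 0) : ∃ c > 0, ∀ k, c * ‖u‖ ^ k ≤ ‖Y k‖ + ‖Y (k + 1)‖ := by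
  have hZ : ∀ k, Y (k + 1) - u * Y k = v ^ k * (Y 1 - u * Y 0) := by
    intro k
    induction k with
    | zero => simp
    | succ k ih => rw [pow_succ', mul_assoc, ← ih, hY]; noncomm_ring
  by_cases hZ0 : Y 1 - u * Y 0 = 0
  · have hYk : ∀ k, Y k = u ^ k * Y 0 := by
      intro k
      induction k with
      | zero => simp
      | succ k ih => rw [pow_succ', mul_assoc, ← ih, ← sub_eq_zero, hZ k, hZ0, mul_zero]
    have hY0 : Y 0 ≠ 0 := by
      obtain ⟨k, hk⟩ := hne
      exact fun h => hk (by rw [hYk k, h, mul_zero])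
    refine ⟨‖Y 0‖, norm_pos_iff.mpr hY0, fun k => ?_⟩
    calc ‖Y 0‖ * ‖u‖ ^ k = ‖Y k‖ := by rw [hYk k, norm_mul, norm_pow, mul_comm]
      _ ≤ ‖Y k‖ + ‖Y (k + 1)‖ := le_add_of_nonneg_right (norm_nonneg _)
  · refine ⟨‖Y 1 - u * Y 0‖ / (1 + ‖u‖), div_pos (norm_pos_iff.mpr hZ0) (by positivity),
      fun k => ?_⟩
    rw [div_mul_eq_mul_div, div_le_iff₀ (by positivity)]
    calc ‖Y 1 - u * Y 0‖ * ‖u‖ ^ k = ‖Y (k + 1) - u * Y k‖ := by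
          rw [hZ k, norm_mul, norm_pow, huv, mul_comm]
      _ ≤ ‖Y (k + 1)‖ + ‖u‖ * ‖Y k‖ := (norm_sub_le _ _).trans_eq (by rw [norm_mul])
      _ ≤ (‖Y k‖ + ‖Y (k + 1)‖) * (1 + ‖u‖) := by
          nlinarith [norm_nonneg (Y k), norm_nonneg (Y (k + 1)), norm_nonneg u]

theorem Quaternion.two_mul_re_smul (s y : ℍ[ℝ]) : (2 * s.re) • y = (s + star s) * y := by
  rw [self_add_star, ← coe_mul_eq_smul]; push_cast; rfl

theorem Quaternion.norm_sq_smul (s y : ℍ[ℝ]) : (‖s‖ ^ 2) • y = (star s * s) * y := by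
  rw [star_mul_self, normSq_eq_norm_mul_self, ← coe_mul_eq_smul, sq]

theorem quadratic_eq_zero_of_map_eq_op_smul {E F : Type*} [AddCommGroup E]
    [Module ℍ[ℝ]ᵐᵒᵖ E] [FunLike F E E] [LinearMapClass F ℍ[ℝ]ᵐᵒᵖ E E] (T : F) {s : ℍ[ℝ]}
    {v : E} (hv : T v = op s • v) :
    T (T v) - op ((2 * s.re : ℝ) : ℍ[ℝ]) • T v + op ((‖s‖ ^ 2 : ℝ) : ℍ[ℝ]) • v = 0 := by
  have hs : s * s - s * ((2 * s.re : ℝ) : ℍ[ℝ]) + ((‖s‖ ^ 2 : ℝ) : ℍ[ℝ]) = 0 := by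
    rw [← self_add_star', sq, ← normSq_eq_norm_mul_self, ← self_mul_star, mul_add]
    abel
  rw [hv, map_smul, hv, smul_smul, smul_smul, ← sub_smul, ← add_smul, ← op_mul, ← op_mul,
    ← op_sub, ← op_add, hs, op_zero, zero_smul]

local notation "ℓ²ℍ" => lp (fun _ : ℕ+ => ℍ[ℝ]) 2

section WeightedShift

variable {w : ℕ+ → ℝ} {T : ℓ²ℍ →L[ℍ[ℝ]ᵐᵒᵖ] ℓ²ℍ}

theorem weightedShift_quadratic_apply
    (hT : ∀ (x : ℓ²ℍ) (n : ℕ+), T x n = ((w n : ℝ) : ℍ[ℝ]) * x (n + 1)) (s : ℍ[ℝ]) (x : ℓ²ℍ)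
    (n : ℕ+) :
    (T (T x) - op ((2 * s.re : ℝ) : ℍ[ℝ]) • T x + op ((‖s‖ ^ 2 : ℝ) : ℍ[ℝ]) • x) n
      = w n • w (n + 1) • x (n + 1 + 1) - (2 * s.re) • w n • x (n + 1) + (‖s‖ ^ 2) • x n := by
  simp only [lp.coeFn_sub, lp.coeFn_add, lp.coeFn_smul, Pi.sub_apply, Pi.add_apply,
    Pi.smul_apply, hT, op_smul_eq_mul, mul_coe_eq_smul, coe_mul_eq_smul]

theorem weightedShift_exists_pos_mul_pow_le_prod (hw : ∀ n, 0 < w n) {C : ℝ}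
    (hC : ∀ n, w n ≤ C) (hT : ∀ (x : ℓ²ℍ) (n : ℕ+), T x n = ((w n : ℝ) : ℍ[ℝ]) * x (n + 1))
    {s : ℍ[ℝ]} {x : ℓ²ℍ} (hx : x ≠ 0)
    (hQ : T (T x) - op ((2 * s.re : ℝ) : ℍ[ℝ]) • T x + op ((‖s‖ ^ 2 : ℝ) : ℍ[ℝ]) • x = 0) :
    ∃ c > 0, ∀ k, c * ‖s‖ ^ k ≤ ∏ i ∈ Finset.range k, w i.succPNat := by
  set B : ℕ → ℝ := fun k => ∏ i ∈ Finset.range k, w i.succPNat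
  have hB_pos : ∀ k, 0 < B k := fun k => Finset.prod_pos fun i _ => hw _
  set Y : ℕ → ℍ[ℝ] := fun k => B k • x k.succPNat
  have hrec : ∀ k, Y (k + 2) = (s + star s) * Y (k + 1) - star s * s * Y k := by
    intro k
    rw [← two_mul_re_smul, ← norm_sq_smul]
    refine prod_range_smul_recurrence (W := fun i => w i.succPNat) (ξ := fun k => x k.succPNat)
      (fun k => ?_) k
    exact (weightedShift_quadratic_apply hT s x k.succPNat).symm.trans (by rw [hQ]; rfl)
  have hne : ∃ k, Y k ≠ 0 := by
    obtain ⟨n, hn⟩ : ∃ n, x n ≠ 0 := by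
      by_contra! h
      exact hx (lp.ext (funext h))
    exact ⟨n.natPred, by simpa [Y, (hB_pos _).ne'] using hn⟩
  obtain ⟨c, hc, hcY⟩ := exists_pos_mul_pow_le_norm_add_norm (Quaternion.norm_star s) hrec hne
  have hYle : ∀ k, ‖Y k‖ ≤ B k * ‖x‖ := fun k => by
    rw [norm_smul, Real.norm_eq_abs, abs_of_pos (hB_pos k)]
    exact mul_le_mul_of_nonneg_left (lp.norm_apply_le_norm two_ne_zero x _) (hB_pos k).le
  have hC0 : 0 ≤ C := (hw 1).le.trans (hC 1)
  have hx0 : 0 < ‖x‖ := norm_pos_iff.mpr hx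
  refine ⟨c / ((1 + C) * ‖x‖), by positivity, fun k => ?_⟩
  rw [div_mul_eq_mul_div, div_le_iff₀ (by positivity)]
  calc c * ‖s‖ ^ k ≤ ‖Y k‖ + ‖Y (k + 1)‖ := hcY k
    _ ≤ B k * ‖x‖ + B k * w k.succPNat * ‖x‖ :=
        add_le_add (hYle k) (by rw [← Finset.prod_range_succ]; exact hYle (k + 1))
    _ = B k * ((1 + w k.succPNat) * ‖x‖) := by ring
    _ ≤ B k * ((1 + C) * ‖x‖) := by have := hB_pos k; gcongr; exact hC _

theorem weightedShift_norm_le_liminf (hw : ∀ n, 0 < w n) {C : ℝ} (hC : ∀ n, w n ≤ C)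
    (hT : ∀ (x : ℓ²ℍ) (n : ℕ+), T x n = ((w n : ℝ) : ℍ[ℝ]) * x (n + 1))
    {s : ℍ[ℝ]} {x : ℓ²ℍ} (hx : x ≠ 0)
    (hQ : T (T x) - op ((2 * s.re : ℝ) : ℍ[ℝ]) • T x + op ((‖s‖ ^ 2 : ℝ) : ℍ[ℝ]) • x = 0) :
    ‖s‖ ≤ liminf (fun k : ℕ => (∏ i ∈ Finset.range k, w i.succPNat) ^ (k : ℝ)⁻¹) atTop :=
  let ⟨_, hc, hcB⟩ := weightedShift_exists_pos_mul_pow_le_prod hw hC hT hx hQ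
  le_liminf_rpow_inv_of_mul_pow_le hc (norm_nonneg s) hcB
    (isBoundedUnder_le_prod_range_rpow_inv (fun _ => (hw _).le) fun _ => hC _)

theorem weightedShift_exists_ne_zero_map_eq_op_smul (hw : ∀ n, 0 < w n)
    (hT : ∀ (x : ℓ²ℍ) (n : ℕ+), T x n = ((w n : ℝ) : ℍ[ℝ]) * x (n + 1))
    {t : ℝ} (hsum : Summable fun k => (t ^ k / ∏ i ∈ Finset.range k, w i.succPNat) ^ 2) :
    ∃ v : ℓ²ℍ, v ≠ 0 ∧ T v = op (t : ℍ[ℝ]) • v := by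
  set B : ℕ → ℝ := fun k => ∏ i ∈ Finset.range k, w i.succPNat
  let f : ℕ+ → ℍ[ℝ] := fun n => ((t ^ n.natPred / B n.natPred : ℝ) : ℍ[ℝ])
  have hf : Memℓp f 2 := by
    rw [memℓp_gen_iff (by norm_num), ← Equiv.pnatEquivNat.symm.summable_iff]
    convert hsum using 2 with k
    simp only [f, Function.comp_apply, Equiv.pnatEquivNat_symm_apply, Nat.natPred_succPNat,
      Quaternion.norm_coe, Real.norm_eq_abs, ENNReal.toReal_ofNat, Real.rpow_two, sq_abs, B]
  refine ⟨⟨f, hf⟩, fun h => ?_, lp.ext (funext fun n => ?_)⟩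
  · have : f 1 = 0 := congrArg (fun v : ℓ²ℍ => v 1) h
    simp [f, B, PNat.natPred] at this
  · obtain ⟨k, rfl⟩ : ∃ k, n = k.succPNat := ⟨n.natPred, n.succPNat_natPred.symm⟩
    rw [hT]
    show (w k.succPNat : ℍ[ℝ]) * ((t ^ (k + 1) / B (k + 1) : ℝ) : ℍ[ℝ])
      = ((t ^ k / B k : ℝ) : ℍ[ℝ]) * (t : ℍ[ℝ])
    have hB1 : B (k + 1) = B k * w k.succPNat := Finset.prod_range_succ _ _
    have : w k.succPNat ≠ 0 := (hw _).ne'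
    have : B k ≠ 0 := Finset.prod_ne_zero_iff.mpr fun i _ => (hw _).ne'
    rw [← coe_mul, ← coe_mul, hB1]
    congr 1
    field_simp
    ring

theorem weightedShift_exists_quadratic_eq_zero (hw : ∀ n, 0 < w n)
    (hT : ∀ (x : ℓ²ℍ) (n : ℕ+), T x n = ((w n : ℝ) : ℍ[ℝ]) * x (n + 1)) {t : ℝ} (ht : 0 ≤ t)
    (htr : t = 0 ∨
      t < liminf (fun k : ℕ => (∏ i ∈ Finset.range k, w i.succPNat) ^ (k : ℝ)⁻¹) atTop) :
    ∃ s : ℍ[ℝ], t = ‖s‖ ∧ ∃ v : ℓ²ℍ, v ≠ 0 ∧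
      T (T v) - op ((2 * s.re : ℝ) : ℍ[ℝ]) • T v + op ((‖s‖ ^ 2 : ℝ) : ℍ[ℝ]) • v = 0 := by
  have hsum : Summable fun k => (t ^ k / ∏ i ∈ Finset.range k, w i.succPNat) ^ 2 := by
    rcases htr with rfl | htr
    · exact summable_of_ne_finset_zero (s := {0}) fun k hk => by
        simp [zero_pow (Finset.notMem_singleton.mp hk)]
    · exact summable_sq_pow_div_of_lt_liminf ht
        (fun k => Finset.prod_nonneg fun i _ => (hw _).le) htr
  obtain ⟨v, hv0, hv⟩ := weightedShift_exists_ne_zero_map_eq_op_smul hw hT hsum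
  exact ⟨t, by rw [norm_coe, Real.norm_eq_abs, abs_of_nonneg ht], v, hv0,
    quadratic_eq_zero_of_map_eq_op_smul T hv⟩

end WeightedShift

/-- For a backward unilateral weighted shift `T` on `ℓ²(ℕ⁺, ℍ)` with
bounded positive real weights and `r = liminf (w₁⋯w_n)^{1/n}`: every `s ∈ ℍ` with
`‖s‖ > r` is not in the S-point spectrum (only `x = 0` solves `Q_s(T)x = 0`), and the
S-point spectrum radius of `T` equals `r`. -/
theorem weightedShift_sPointSpectrumRadius (w : ℕ+ → ℝ) (hw : ∀ n, 0 < w n)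
    (hwb : ∃ C : ℝ, ∀ n, w n ≤ C)
    (T : lp (fun _ : ℕ+ => ℍ[ℝ]) 2 →L[ℍ[ℝ]ᵐᵒᵖ] lp (fun _ : ℕ+ => ℍ[ℝ]) 2)
    (hT : ∀ (x : lp (fun _ : ℕ+ => ℍ[ℝ]) 2) (n : ℕ+), T x n = ((w n : ℝ) : ℍ[ℝ]) * x (n + 1)) :
    (∀ s : ℍ[ℝ],
      liminf (fun n : ℕ+ => (∏ k ∈ Finset.Icc 1 n, w k) ^ (((n : ℕ) : ℝ)⁻¹)) atTop < ‖s‖ →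
      ∀ x : lp (fun _ : ℕ+ => ℍ[ℝ]) 2,
        T (T x) - op ((2 * s.re : ℝ) : ℍ[ℝ]) • T x + op ((‖s‖ ^ 2 : ℝ) : ℍ[ℝ]) • x = 0 →
        x = 0) ∧
    sSup {c : ℝ | ∃ s : ℍ[ℝ], c = ‖s‖ ∧
        ∃ v : lp (fun _ : ℕ+ => ℍ[ℝ]) 2, v ≠ 0 ∧
          T (T v) - op ((2 * s.re : ℝ) : ℍ[ℝ]) • T v + op ((‖s‖ ^ 2 : ℝ) : ℍ[ℝ]) • v = 0} =
      liminf (fun n : ℕ+ => (∏ k ∈ Finset.Icc 1 n, w k) ^ (((n : ℕ) : ℝ)⁻¹)) atTop := by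
  obtain ⟨C, hC⟩ := hwb
  rw [PNat.liminf_prod_Icc_rpow_inv]
  set r := liminf (fun k : ℕ => (∏ i ∈ Finset.range k, w i.succPNat) ^ (k : ℝ)⁻¹) atTop
  refine ⟨fun s hs x hQ => by_contra fun hx =>
    (weightedShift_norm_le_liminf hw hC hT hx hQ).not_gt hs, ?_⟩
  have h0 := weightedShift_exists_quadratic_eq_zero hw hT le_rfl (Or.inl rfl)
  refine csSup_eq_of_forall_le_of_forall_lt_exists_gt ⟨0, h0⟩ ?_ fun c hc => ?_
  · rintro _ ⟨s, rfl, v, hv, hQ⟩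
    exact weightedShift_norm_le_liminf hw hC hT hv hQ
  · rcases lt_or_ge c 0 with hc0 | hc0
    · exact ⟨0, h0, hc0⟩
    · exact ⟨(c + r) / 2, weightedShift_exists_quadratic_eq_zero hw hT (by linarith)
        (Or.inr (by linarith)), by linarith⟩
end

section
/- Let T be the operator on ℓ²(ℕ, ℍ) defined by (Tx)_n = x_{n+1} + (𝐢/2)·x_n, where 𝐢 is the quaternion imaginary unit (the standard backward shift plus (𝐢/2)·id). Identify ℂ with ℝ + ℝ𝐢 ⊆ ℍ. (a) If λ ∈ ℂ satisfies Im(λ) > 0, |λ − 𝐢/2| < 1 and |λ + 𝐢/2| > 1, then {x ∈ ℓ²(ℕ,ℍ) : T(Tx) − (Tx)•(2Re(λ)) + x•|λ|² = 0} = {v₁•q : q ∈ ℍ}, where v₁ = ((λ − 𝐢/2)ⁿ)_{n≥0}; in particular this solution space has dimension 1 over ℍ. (b) If ω ∈ ℂ satisfies Im(ω) > 0, |ω − 𝐢/2| < 1 and |ω + 𝐢/2| < 1, then {x ∈ ℓ²(ℕ,ℍ) : T(Tx) − (Tx)•(2Re(ω)) + x•|ω|² = 0} = {v₂•p + v₃•q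 : p, q ∈ ℍ}, where v₂ = ((ω − 𝐢/2)ⁿ)_{n≥0} and v₃ = ((ω̄ − 𝐢/2)ⁿ)_{n≥0}; in particular this solution space has dimension 2 over ℍ. -/
/-!
Since real scalars are central in `ℍ`, the equation `T²x − 2 Re λ · Tx + |λ|² x = 0` is,
coordinatewise, the linear recurrence `x (n+2) = (α + β) x (n+1) − α β x n` with
`α = λ − 𝐢/2` and `β = λ̄ − 𝐢/2`. These roots are complex, hence commute, and differ because
`Im λ > 0`, so the solutions are exactly `αⁿ p + βⁿ q`. An `ℓ²` sequence tends to `0`, which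
forces `q = 0` when `|β| = |λ + 𝐢/2| > 1`.
-/

open Quaternion MulOpposite Filter Topology
open scoped ENNReal ComplexConjugate

theorem Memℓp.tendsto_norm_cofinite_zero {α : Type*} {E : α → Type*}
    [∀ i, NormedAddCommGroup (E i)] {p : ℝ≥0∞} {f : ∀ i, E i} (hp : 0 < p.toReal)
    (hf : Memℓp f p) : Tendsto (fun i => ‖f i‖) cofinite (𝓝 0) := by
  have hpow := (hf.summable hp).tendsto_cofinite_zero
  have hroot : Tendsto (fun y : ℝ => y ^ p.toReal⁻¹) (𝓝 0) (𝓝 0) := by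
    simpa [Real.zero_rpow (inv_ne_zero hp.ne')] using
      (Real.continuousAt_rpow_const 0 p.toReal⁻¹ (Or.inr (inv_pos.2 hp).le)).tendsto
  refine (hroot.comp hpow).congr fun i => ?_
  simp [Real.rpow_rpow_inv (norm_nonneg _) hp.ne']

theorem lp.tendsto_atTop_zero {E : Type*} [NormedAddCommGroup E] {p : ℝ≥0∞}
    (hp : 0 < p.toReal) (x : lp (fun _ : ℕ => E) p) : Tendsto (fun n => x n) atTop (𝓝 0) := by
  rw [tendsto_zero_iff_norm_tendsto_zero, ← Nat.cofinite_eq_atTop]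
  exact (lp.memℓp x).tendsto_norm_cofinite_zero hp

section Recurrence

variable {R : Type*}

theorem Commute.pow_mul_add_pow_mul_add_two [Ring R] {a b : R} (hab : Commute a b)
    (p q : R) (n : ℕ) :
    a ^ (n + 2) * p + b ^ (n + 2) * q
      = (a + b) * (a ^ (n + 1) * p + b ^ (n + 1) * q) - a * b * (a ^ n * p + b ^ n * q) := by
  simp only [pow_succ', mul_add, add_mul, mul_assoc, hab.symm.left_comm]
  abel

theorem Commute.exists_pow_mul_add_pow_mul_of_recurrence [DivisionRing R] {a b : R}
    (hab : Commute a b) (hne : a ≠ b) {x : ℕ → R}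
    (hx : ∀ n, x (n + 2) = (a + b) * x (n + 1) - a * b * x n) :
    ∃ p q, ∀ n, x n = a ^ n * p + b ^ n * q := by
  have hd : b - a ≠ 0 := sub_ne_zero.2 hne.symm
  have had : Commute a (b - a)⁻¹ := (hab.sub_right (Commute.refl a)).inv_right₀
  have hbd : Commute b (b - a)⁻¹ := ((Commute.refl b).sub_right hab.symm).inv_right₀
  -- the solution of `p + q = x 0`, `a * p + b * q = x 1`
  refine ⟨(b - a)⁻¹ * (b * x 0 - x 1), (b - a)⁻¹ * (x 1 - a * x 0), fun n => ?_⟩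
  induction n using Nat.twoStepInduction with
  | zero =>
    rw [pow_zero, pow_zero, one_mul, one_mul, ← mul_add, sub_add_sub_cancel, ← sub_mul,
      inv_mul_cancel_left₀ hd]
  | one =>
    rw [pow_one, pow_one, ← mul_assoc, ← mul_assoc, had.eq, hbd.eq, mul_assoc, mul_assoc,
      ← mul_add]
    have : a * (b * x 0 - x 1) + b * (x 1 - a * x 0) = (b - a) * x 1 := by
      rw [mul_sub, mul_sub, ← mul_assoc, ← mul_assoc, hab.eq]
      noncomm_ring
    rw [this, inv_mul_cancel_left₀ hd]
  | more n h0 h1 => rw [hx, h0, h1, hab.pow_mul_add_pow_mul_add_two]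

theorem Commute.recurrence_iff_exists_pow_mul_add_pow_mul [DivisionRing R] {a b : R}
    (hab : Commute a b) (hne : a ≠ b) (x : ℕ → R) :
    (∀ n, x (n + 2) = (a + b) * x (n + 1) - a * b * x n) ↔
      ∃ p q, ∀ n, x n = a ^ n * p + b ^ n * q := by
  refine ⟨hab.exists_pow_mul_add_pow_mul_of_recurrence hne, ?_⟩
  rintro ⟨p, q, hx⟩ n
  rw [hx, hx, hx, hab.pow_mul_add_pow_mul_add_two]

end Recurrence

theorem eq_zero_of_tendsto_pow_mul_add_pow_mul {R : Type*} [NormedDivisionRing R]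
    {a b p q : R} (ha : ‖a‖ < 1) (hb : 1 ≤ ‖b‖)
    (h : Tendsto (fun n : ℕ => a ^ n * p + b ^ n * q) atTop (𝓝 0)) : q = 0 := by
  have hap : Tendsto (fun n : ℕ => a ^ n * p) atTop (𝓝 0) := by
    simpa using (tendsto_pow_atTop_nhds_zero_of_norm_lt_one ha).mul_const p
  have hbq : Tendsto (fun n : ℕ => ‖b ^ n * q‖) atTop (𝓝 0) := by
    simpa using (h.sub hap).norm
  refine norm_le_zero_iff.1 (ge_of_tendsto' hbq fun n => ?_)
  rw [norm_mul, norm_pow]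
  exact le_mul_of_one_le_left (norm_nonneg q) (one_le_pow₀ hb)

namespace Quaternion

theorem coeComplex_pow (z : ℂ) (n : ℕ) : ((z ^ n : ℂ) : ℍ[ℝ]) = (z : ℍ[ℝ]) ^ n :=
  map_pow ofComplex z n

theorem coeComplex_injective : Function.Injective (coeComplex : ℂ → ℍ[ℝ]) :=
  ofComplex.injective

theorem norm_coeComplex (z : ℂ) : ‖(z : ℍ[ℝ])‖ = ‖z‖ := by
  rw [← sq_eq_sq₀ (norm_nonneg _) (norm_nonneg _), sq, ← normSq_eq_norm_mul_self,
    Complex.sq_norm, normSq_def', Complex.normSq_apply]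
  simp [sq]

theorem coe_two_re_sub_two_mul_halfI (lam : ℂ) :
    ((2 * lam.re : ℝ) : ℍ[ℝ]) - 2 * ((Complex.I / 2 : ℂ) : ℍ[ℝ])
      = (((lam - Complex.I / 2) + (conj lam - Complex.I / 2) : ℂ) : ℍ[ℝ]) := by
  have h : ((2 * lam.re : ℝ) : ℂ) - 2 * (Complex.I / 2)
      = (lam - Complex.I / 2) + (conj lam - Complex.I / 2) := by
    push_cast
    rw [Complex.re_eq_add_conj]
    ring
  rw [← h, ← coe_ofComplex, map_sub, map_mul, map_ofNat, coe_ofComplex, coeComplex_coe]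

theorem coe_halfI_sq_sub_halfI_mul_two_re_add_norm_sq (lam : ℂ) :
    ((Complex.I / 2 : ℂ) : ℍ[ℝ]) * ((Complex.I / 2 : ℂ) : ℍ[ℝ])
        - ((Complex.I / 2 : ℂ) : ℍ[ℝ]) * ((2 * lam.re : ℝ) : ℍ[ℝ])
        + ((‖lam‖ ^ 2 : ℝ) : ℍ[ℝ])
      = (((lam - Complex.I / 2) * (conj lam - Complex.I / 2) : ℂ) : ℍ[ℝ]) := by
  have h : Complex.I / 2 * (Complex.I / 2) - Complex.I / 2 * ((2 * lam.re : ℝ) : ℂ)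
      + ((‖lam‖ ^ 2 : ℝ) : ℂ) = (lam - Complex.I / 2) * (conj lam - Complex.I / 2) := by
    push_cast
    rw [Complex.re_eq_add_conj, ← Complex.mul_conj']
    ring
  rw [← h, ← coe_ofComplex, map_add, map_sub, map_mul, map_mul, coe_ofComplex,
    coeComplex_coe, coeComplex_coe]

end Quaternion

theorem quadratic_shift_add_left_mul_eq_zero_iff
    (T : lp (fun _ : ℕ => ℍ[ℝ]) 2 → lp (fun _ : ℕ => ℍ[ℝ]) 2) (c : ℍ[ℝ])
    (hT : ∀ (x : lp (fun _ : ℕ => ℍ[ℝ]) 2) (n : ℕ), T x n = x (n + 1) + c * x n)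
    (r s : ℝ) (x : lp (fun _ : ℕ => ℍ[ℝ]) 2) :
    T (T x) - op (r : ℍ[ℝ]) • T x + op (s : ℍ[ℝ]) • x = 0 ↔
      ∀ n, x (n + 2) = (r - 2 * c) * x (n + 1) - (c * c - c * r + s) * x n := by
  rw [lp.ext_iff, funext_iff]
  refine forall_congr' fun n => ?_
  simp only [lp.coeFn_add, lp.coeFn_sub, lp.coeFn_smul, lp.coeFn_zero, Pi.add_apply,
    Pi.sub_apply, Pi.smul_apply, Pi.zero_apply, smul_eq_mul_unop, unop_op, hT,
    ← coe_commutes]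
  rw [← sub_eq_zero (a := x (n + 2))]
  convert Iff.rfl using 2
  noncomm_ring

theorem quadratic_shift_add_halfI_eq_zero_iff
    (T : lp (fun _ : ℕ => ℍ[ℝ]) 2 → lp (fun _ : ℕ => ℍ[ℝ]) 2)
    (hT : ∀ (x : lp (fun _ : ℕ => ℍ[ℝ]) 2) (n : ℕ),
      T x n = x (n + 1) + ((Complex.I / 2 : ℂ) : ℍ[ℝ]) * x n)
    {lam : ℂ} (him : 0 < lam.im) (x : lp (fun _ : ℕ => ℍ[ℝ]) 2) :
    T (T x) - op ((2 * lam.re : ℝ) : ℍ[ℝ]) • T x + op ((‖lam‖ ^ 2 : ℝ) : ℍ[ℝ]) • x = 0 ↔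
      ∃ p q : ℍ[ℝ], ∀ n, x n = (((lam - Complex.I / 2) ^ n : ℂ) : ℍ[ℝ]) * p
        + (((conj lam - Complex.I / 2) ^ n : ℂ) : ℍ[ℝ]) * q := by
  have hcomm :
      Commute ((lam - Complex.I / 2 : ℂ) : ℍ[ℝ]) ((conj lam - Complex.I / 2 : ℂ) : ℍ[ℝ]) :=
    (Commute.all _ _).map ofComplex
  have hne : ((lam - Complex.I / 2 : ℂ) : ℍ[ℝ]) ≠ ((conj lam - Complex.I / 2 : ℂ) : ℍ[ℝ]) :=
    coeComplex_injective.ne fun h => by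
      have him_neg : lam.im = -lam.im := by simpa using congrArg Complex.im h
      linarith
  simp only [quadratic_shift_add_left_mul_eq_zero_iff T _ hT, coe_two_re_sub_two_mul_halfI,
    coe_halfI_sq_sub_halfI_mul_two_re_add_norm_sq, coeComplex_add, coeComplex_mul,
    hcomm.recurrence_iff_exists_pow_mul_add_pow_mul hne, coeComplex_pow]

/-- Let `T` be the backward shift plus `(𝐢/2)·id` on `ℓ²(ℕ, ℍ)`.
(a) For `λ ∈ ℂ` with `Im λ > 0`, `|λ − 𝐢/2| < 1`, `|λ + 𝐢/2| > 1`, the solution set of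
`Q_λ(T) x = 0` is `{v₁ • q : q ∈ ℍ}` with `v₁ = ((λ − 𝐢/2)ⁿ)ₙ` (dimension 1 over `ℍ`).
(b) For `ω ∈ ℂ` with `Im ω > 0`, `|ω − 𝐢/2| < 1`, `|ω + 𝐢/2| < 1`, it is
`{v₂ • p + v₃ • q : p, q ∈ ℍ}` with `v₂ = ((ω − 𝐢/2)ⁿ)ₙ`, `v₃ = ((ω̄ − 𝐢/2)ⁿ)ₙ`
(dimension 2 over `ℍ`). -/
theorem shift_plus_halfI_sEigenspaces
    (T : lp (fun _ : ℕ => ℍ[ℝ]) 2 → lp (fun _ : ℕ => ℍ[ℝ]) 2)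
    (hT : ∀ (x : lp (fun _ : ℕ => ℍ[ℝ]) 2) (n : ℕ),
      T x n = x (n + 1) + ((Complex.I / 2 : ℂ) : ℍ[ℝ]) * x n) :
    (∀ lam : ℂ, 0 < lam.im → ‖lam - Complex.I / 2‖ < 1 → 1 < ‖lam + Complex.I / 2‖ →
      {x : lp (fun _ : ℕ => ℍ[ℝ]) 2 |
          T (T x) - op ((2 * lam.re : ℝ) : ℍ[ℝ]) • T x
            + op ((‖lam‖ ^ 2 : ℝ) : ℍ[ℝ]) • x = 0} =
        {x : lp (fun _ : ℕ => ℍ[ℝ]) 2 | ∃ q : ℍ[ℝ], ∀ n : ℕ,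
          x n = (((lam - Complex.I / 2) ^ n : ℂ) : ℍ[ℝ]) * q}) ∧
    (∀ ω : ℂ, 0 < ω.im → ‖ω - Complex.I / 2‖ < 1 → ‖ω + Complex.I / 2‖ < 1 →
      {x : lp (fun _ : ℕ => ℍ[ℝ]) 2 |
          T (T x) - op ((2 * ω.re : ℝ) : ℍ[ℝ]) • T x
            + op ((‖ω‖ ^ 2 : ℝ) : ℍ[ℝ]) • x = 0} =
        {x : lp (fun _ : ℕ => ℍ[ℝ]) 2 | ∃ p q : ℍ[ℝ], ∀ n : ℕ,
          x n = (((ω - Complex.I / 2) ^ n : ℂ) : ℍ[ℝ]) * p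
            + (((starRingEnd ℂ ω - Complex.I / 2) ^ n : ℂ) : ℍ[ℝ]) * q}) := by
  refine ⟨fun lam him hα hβ => Set.ext fun x => ?_,
    fun ω him _ _ => Set.ext (quadratic_shift_add_halfI_eq_zero_iff T hT him)⟩
  refine (quadratic_shift_add_halfI_eq_zero_iff T hT him x).trans ⟨?_, ?_⟩
  · rintro ⟨p, q, hx⟩
    have hlim := lp.tendsto_atTop_zero (by norm_num) x
    simp only [hx, coeComplex_pow] at hlim
    have hq : q = 0 := by
      refine eq_zero_of_tendsto_pow_mul_add_pow_mul ?_ ?_ hlim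
      · rwa [norm_coeComplex]
      · have hconj : conj lam - Complex.I / 2 = conj (lam + Complex.I / 2) := by
          simp [sub_eq_add_neg, neg_div, map_ofNat]
        rw [norm_coeComplex, hconj, Complex.norm_conj]
        exact hβ.le
    exact ⟨p, fun n => by simpa [hq] using hx n⟩
  · rintro ⟨q, hx⟩
    exact ⟨q, 0, fun n => by simpa using hx n⟩
end

section
/- Let Δ ⊆ ℂ be open and H a real normed space carrying a compatible right quaternionic module structure (as in the context). Let T be a continuous right linear operator on H and γ : Δ → H an infinitely ℝ-differentiable right holomorphic map whose iterated derivatives γ^(k) are right holomorphic, and suppose Tγ(ω) = γ(ω)•ω for all ω ∈ Δ. Then for every k ≥ 1 and every ω ∈ Δ: Tγ^(k)(ω) = γ^(k)(ω)•ω + k·γ^(k−1)(ω), and consequently T(Tγ^(k)(ω)) − (Tγ^(k)(ω))•(2Re(ω)) + γ^(k)(ω)•|ω|² = k(k−1)·γ^(k−2)(ω) + k·γ^(k−1)(ω)•(ω − ω̄) (for k = 1 the first term on the right is absent). -/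
/-!
Differentiating `T γ⁽ᵏ⁾(z) = γ⁽ᵏ⁾(z) • z + k γ⁽ᵏ⁻¹⁾(z)` along the real direction at `ω` gives
the same identity for `k + 1`, the factor `z` contributing one more copy of `γ⁽ᵏ⁾(ω)`.
Applying `T` once more and using `q² - 2 Re(q) q + |q|² = 0` for `q = ω` gives the second
identity.
-/

open Quaternion MulOpposite Filter Topology

theorem Quaternion.mul_self_sub_mul_two_re_add_normSq (q : ℍ[ℝ]) :
    q * q - q * ((2 * q.re : ℝ) : ℍ[ℝ]) + ((normSq q : ℝ) : ℍ[ℝ]) = 0 := by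
  rw [← self_add_star', mul_add, self_mul_star]
  abel

theorem HasFDerivAt.hasDerivAt_comp_add_ofReal {E : Type*} [NormedAddCommGroup E]
    [NormedSpace ℝ E] {f : ℂ → E} {D : ℂ →L[ℝ] E} {ω : ℂ} (h : HasFDerivAt f D ω) :
    HasDerivAt (fun t : ℝ => f (ω + t)) (D 1) 0 := by
  have hline : HasDerivAt (fun t : ℝ => ω + t) 1 0 := by
    simpa using (Complex.ofRealCLM.hasDerivAt (x := (0 : ℝ))).const_add ω
  exact (by simpa using h : HasFDerivAt f D (ω + (0 : ℝ))).comp_hasDerivAt 0 hline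

section QuaternionicModule

variable {H : Type*} [NormedAddCommGroup H] [NormedSpace ℝ H] [Module ℍ[ℝ]ᵐᵒᵖ H]

theorem op_smul_real_smul_comm (hreal : ∀ (r : ℝ) (x : H), op ((r : ℍ[ℝ])) • x = r • x)
    (a : ℍ[ℝ]) (r : ℝ) (x : H) : op a • (r • x) = r • (op a • x) := by
  rw [← hreal, ← hreal, smul_smul, smul_smul, ← op_mul, ← op_mul, coe_commutes]

theorem map_real_smul_of_op_smul (hreal : ∀ (r : ℝ) (x : H), op ((r : ℍ[ℝ])) • x = r • x)
    (T : H →ₗ[ℍ[ℝ]ᵐᵒᵖ] H) (r : ℝ) (x : H) : T (r • x) = r • T x := by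
  rw [← hreal, map_smul, hreal]

theorem op_coeComplex_add_ofReal_smul
    (hreal : ∀ (r : ℝ) (x : H), op ((r : ℍ[ℝ])) • x = r • x)
    (ω : ℂ) (t : ℝ) (x : H) :
    op ((ω + t : ℂ) : ℍ[ℝ]) • x = op (ω : ℍ[ℝ]) • x + t • x := by
  rw [coeComplex_add, coeComplex_coe, op_add, add_smul, hreal]

theorem map_eq_op_smul_add_of_eventuallyEq
    (hreal : ∀ (r : ℝ) (x : H), op ((r : ℍ[ℝ])) • x = r • x)
    {ω : ℂ} (hω : Continuous fun x : H => op (ω : ℍ[ℝ]) • x)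
    (T : H →ₗ[ℍ[ℝ]ᵐᵒᵖ] H) (hT : Continuous T) {f h : ℂ → H} {Df Dh : ℂ →L[ℝ] H}
    (hf : HasFDerivAt f Df ω) (hh : HasFDerivAt h Dh ω)
    (heq : ∀ᶠ z in 𝓝 ω, T (f z) = op (z : ℍ[ℝ]) • f z + h z) :
    T (Df 1) = op (ω : ℍ[ℝ]) • Df 1 + f ω + Dh 1 := by
  let Tℝ : H →L[ℝ] H := T.toAddMonoidHom.toRealLinearMap hT
  let Ω : H →L[ℝ] H := (DistribSMul.toAddMonoidHom H (op (ω : ℍ[ℝ]))).toRealLinearMap hω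
  have hf' := hf.hasDerivAt_comp_add_ofReal
  have hlhs : HasDerivAt (fun t : ℝ => T (f (ω + t))) (T (Df 1)) 0 :=
    Tℝ.hasFDerivAt.comp_hasDerivAt 0 hf'
  have hrhs : HasDerivAt (fun t : ℝ => op (ω : ℍ[ℝ]) • f (ω + t) + t • f (ω + t) + h (ω + t))
      (op (ω : ℍ[ℝ]) • Df 1 + f ω + Dh 1) 0 := by
    have hΩ := Ω.hasFDerivAt.comp_hasDerivAt 0 hf'
    have hsmul : HasDerivAt (fun t : ℝ => t • f (ω + t)) (f ω) 0 :=
      ((hasDerivAt_id' 0).smul hf').congr_deriv (by simp)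
    exact (hΩ.add hsmul).add hh.hasDerivAt_comp_add_ofReal
  have hline : Tendsto (fun t : ℝ => ω + t) (𝓝 0) (𝓝 ω) := by
    simpa using (Complex.continuous_ofReal.const_add ω).tendsto 0
  refine hlhs.unique (hrhs.congr_of_eventuallyEq ?_)
  filter_upwards [hline.eventually heq] with t ht
  rw [ht, op_coeComplex_add_ofReal_smul hreal]

theorem map_map_sub_add_eq (hreal : ∀ (r : ℝ) (x : H), op ((r : ℍ[ℝ])) • x = r • x)
    (T : H →ₗ[ℍ[ℝ]ᵐᵒᵖ] H) (q : ℍ[ℝ]) {x y w : H} {c d : ℝ}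
    (hx : T x = op q • x + c • y) (hy : T y = op q • y + d • w) :
    T (T x) - op ((2 * q.re : ℝ) : ℍ[ℝ]) • T x + op ((normSq q : ℝ) : ℍ[ℝ]) • x =
      (c * d) • w + c • (op (q - star q) • y) := by
  have hq : op q • op q • x - (2 * q.re) • op q • x + normSq q • x = 0 := by
    rw [← hreal, ← hreal, ← mul_smul, ← mul_smul, ← op_mul, ← op_mul, ← sub_smul, ← add_smul,
      ← op_sub, ← op_add, mul_self_sub_mul_two_re_add_normSq, op_zero, zero_smul]
  have hstar : star q = ((2 * q.re : ℝ) : ℍ[ℝ]) - q := by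
    rw [← self_add_star', add_sub_cancel_left]
  rw [hx, map_add, map_smul, map_real_smul_of_op_smul hreal, hx, hy, hstar]
  simp only [op_sub, sub_smul, smul_sub, smul_add, hreal, op_smul_real_smul_comm hreal]
  generalize op q • op q • x = X at hq ⊢
  generalize op q • x = X' at hq ⊢
  generalize op q • y = Y
  linear_combination (norm := module) hq

theorem map_eq_op_smul_add_natCast_smul_pred
    (hreal : ∀ (r : ℝ) (x : H), op ((r : ℍ[ℝ])) • x = r • x)
    {Δ : Set ℂ} (hΔ : IsOpen Δ) (hcont : ∀ ω ∈ Δ, Continuous fun x : H => op (ω : ℍ[ℝ]) • x)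
    (T : H →ₗ[ℍ[ℝ]ᵐᵒᵖ] H) (hT : Continuous T) (g : ℕ → ℂ → H)
    (hg : ∀ (k : ℕ), ∀ z ∈ Δ, ∃ D : ℂ →L[ℝ] H, HasFDerivAt (g k) D z ∧ D 1 = g (k + 1) z)
    (heig : ∀ ω ∈ Δ, T (g 0 ω) = op ((ω : ℍ[ℝ])) • g 0 ω) (k : ℕ) :
    ∀ ω ∈ Δ, T (g k ω) = op ((ω : ℍ[ℝ])) • g k ω + (k : ℝ) • g (k - 1) ω := by
  induction k with
  | zero => simpa using heig
  | succ k ih =>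
    intro ω hω
    obtain ⟨D, hD, hD1⟩ := hg k ω hω
    obtain ⟨D', hD', hD'1⟩ := hg (k - 1) ω hω
    have hstep := map_eq_op_smul_add_of_eventuallyEq hreal (hcont ω hω) T hT hD
      (hD'.const_smul (k : ℝ)) (Filter.eventually_of_mem (hΔ.mem_nhds hω) ih)
    have hpred : g k ω + (k : ℝ) • g (k - 1 + 1) ω = ((k + 1 : ℕ) : ℝ) • g k ω := by
      rcases Nat.eq_zero_or_pos k with rfl | hk
      · simp
      · rw [Nat.sub_add_cancel hk]; push_cast; module
    rwa [smul_apply, hD1, hD'1, add_assoc, hpred] at hstep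

end QuaternionicModule

theorem rightHolomorphic_section_derivatives_general {H : Type*} [NormedAddCommGroup H]
    [NormedSpace ℝ H] [Module ℍ[ℝ]ᵐᵒᵖ H]
    (hcont : ∀ a : ℍ[ℝ], Continuous fun x : H => op a • x)
    (hreal : ∀ (r : ℝ) (x : H), op ((r : ℍ[ℝ])) • x = r • x)
    (Δ : Set ℂ) (hΔ : IsOpen Δ)
    (T : H →ₗ[ℍ[ℝ]ᵐᵒᵖ] H) (hTcont : Continuous T)
    (g : ℕ → ℂ → H)
    (hg : ∀ (k : ℕ), ∀ z ∈ Δ, ∃ D : ℂ →L[ℝ] H, HasFDerivAt (g k) D z ∧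
      D 1 = g (k + 1) z ∧ D Complex.I = op ((Complex.I : ℂ) : ℍ[ℝ]) • g (k + 1) z)
    (heig : ∀ ω ∈ Δ, T (g 0 ω) = op ((ω : ℍ[ℝ])) • g 0 ω) :
    ∀ k : ℕ, 1 ≤ k → ∀ ω ∈ Δ,
      T (g k ω) = op ((ω : ℍ[ℝ])) • g k ω + (k : ℝ) • g (k - 1) ω ∧
      T (T (g k ω)) - op ((2 * ω.re : ℝ) : ℍ[ℝ]) • T (g k ω)
          + op ((‖ω‖ ^ 2 : ℝ) : ℍ[ℝ]) • g k ω =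
        ((k * (k - 1) : ℕ) : ℝ) • g (k - 2) ω
          + (k : ℝ) • (op ((ω : ℍ[ℝ]) - star ((ω : ℍ[ℝ]))) • g (k - 1) ω) := by
  intro k hk ω hω
  have hladder := map_eq_op_smul_add_natCast_smul_pred hreal hΔ (fun ω _ => hcont ω) T hTcont g
    (fun k z hz => (hg k z hz).imp fun _ hD => ⟨hD.1, hD.2.1⟩) heig
  have hk1 := hladder k ω hω
  have hquad := map_map_sub_add_eq hreal T (ω : ℍ[ℝ]) hk1 (hladder (k - 1) ω hω)
  have hnormSq : normSq (ω : ℍ[ℝ]) = ‖ω‖ ^ 2 := by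
    rw [Complex.sq_norm, Complex.normSq_apply, normSq_def']
    simp [sq]
  rw [re_coeComplex, hnormSq, Nat.sub_sub] at hquad
  refine ⟨hk1, ?_⟩
  rw [hquad, Nat.cast_mul, Nat.cast_sub hk, Nat.cast_one]

/-- If `γ = g 0` is right holomorphic with right holomorphic iterated
derivatives `g k` and `T γ(ω) = γ(ω) • ω` on `Δ`, then for all `k ≥ 1` and `ω ∈ Δ`:
`T γ⁽ᵏ⁾(ω) = γ⁽ᵏ⁾(ω) • ω + k γ⁽ᵏ⁻¹⁾(ω)` and
`Q_ω(T) γ⁽ᵏ⁾(ω) = k(k−1) γ⁽ᵏ⁻²⁾(ω) + k γ⁽ᵏ⁻¹⁾(ω) • (ω − ω̄)`. -/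
theorem rightHolomorphic_section_derivatives {H : Type*} [NormedAddCommGroup H]
    [NormedSpace ℝ H] [Module ℍ[ℝ]ᵐᵒᵖ H]
    (hcont : ∀ a : ℍ[ℝ], Continuous fun x : H => op a • x)
    (hlinR : ∀ (a : ℍ[ℝ]) (r : ℝ) (x : H), op a • (r • x) = r • (op a • x))
    (hreal : ∀ (r : ℝ) (x : H), op ((r : ℍ[ℝ])) • x = r • x)
    (Δ : Set ℂ) (hΔ : IsOpen Δ)
    (T : H →ₗ[ℍ[ℝ]ᵐᵒᵖ] H) (hTcont : Continuous T)
    (g : ℕ → ℂ → H)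
    (hg : ∀ (k : ℕ), ∀ z ∈ Δ, ∃ D : ℂ →L[ℝ] H, HasFDerivAt (g k) D z ∧
      D 1 = g (k + 1) z ∧ D Complex.I = op ((Complex.I : ℂ) : ℍ[ℝ]) • g (k + 1) z)
    (heig : ∀ ω ∈ Δ, T (g 0 ω) = op ((ω : ℍ[ℝ])) • g 0 ω) :
    ∀ k : ℕ, 1 ≤ k → ∀ ω ∈ Δ,
      T (g k ω) = op ((ω : ℍ[ℝ])) • g k ω + (k : ℝ) • g (k - 1) ω ∧
      T (T (g k ω)) - op ((2 * ω.re : ℝ) : ℍ[ℝ]) • T (g k ω)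
          + op ((‖ω‖ ^ 2 : ℝ) : ℍ[ℝ]) • g k ω =
        ((k * (k - 1) : ℕ) : ℝ) • g (k - 2) ω
          + (k : ℝ) • (op ((ω : ℍ[ℝ]) - star ((ω : ℍ[ℝ]))) • g (k - 1) ω) :=
  rightHolomorphic_section_derivatives_general hcont hreal Δ hΔ T hTcont g hg heig
end

section
/- Let Δ ⊆ ℂ be open and H a real normed space carrying a compatible right quaternionic module structure (as in the context). Let T be a continuous right linear operator on H, let γ₁, …, γ_n : Δ → H be infinitely ℝ-differentiable right holomorphic maps with right holomorphic iterated derivatives satisfying Tγ_i(ω) = γ_i(ω)•ω on Δ, and let ω₀ ∈ Δ with Im(ω₀) ≠ 0. If γ₁(ω₀), …, γ_n(ω₀) are right ℍ-linearly independent, then for every k ≥ 1 the n·k vectors {γ_i^(j)(ω₀) : 1 ≤ i ≤ n, 0 ≤ j ≤ k−1} are right ℍ-linearly independent, and each of them lies in the kernel of Q_{ω₀}(T)^k. -/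
open Quaternion MulOpposite

/-!
Differentiating `T γ(ω) = γ(ω) • ω` along the real direction gives, at `ω₀`,
`T γ⁽ʲ⁾ = γ⁽ʲ⁾ • ω₀ + γ⁽ʲ⁻¹⁾ • j`. As `ω₀` is a root of the real polynomial
`X² - 2 Re(ω₀) X + |ω₀|²`, the operator `Q = Q_{ω₀}(T)` lowers the index:
`Q γ⁽ʲ⁾ = γ⁽ʲ⁻¹⁾ • 2j Im(ω₀) + γ⁽ʲ⁻²⁾ • j(j-1)`. Hence `Qᵐ` kills `γ⁽ʲ⁾` for `j < m`, while
`Qʲ γ⁽ʲ⁾ = γ⁽⁰⁾ • 2ʲ j! Im(ω₀)ʲ` with a nonzero coefficient when `Im ω₀ ≠ 0`. Applying `Qᵏ` to a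
relation among the `γᵢ⁽ʲ⁾`, `j ≤ k`, leaves only the top layer, which lands on the independent
`γᵢ(ω₀)`; induction on `k` finishes.
-/

theorem Quaternion.mul_self_sub_two_re_mul_add_norm_sq (q : ℍ[ℝ]) :
    q * q - ((2 * q.re : ℝ) : ℍ[ℝ]) * q + ((‖q‖ ^ 2 : ℝ) : ℍ[ℝ]) = 0 := by
  rw [sq, ← normSq_eq_norm_mul_self, ← star_mul_self, ← self_add_star']
  noncomm_ring

theorem Quaternion.norm_coeComplex_s16 (z : ℂ) : ‖(z : ℍ[ℝ])‖ = ‖z‖ := by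
  have hsq : ‖(z : ℍ[ℝ])‖ ^ 2 = ‖z‖ ^ 2 := by
    rw [sq, ← normSq_eq_norm_mul_self, normSq_def', Complex.sq_norm, Complex.normSq_apply]
    simp only [re_coeComplex, imI_coeComplex, imJ_coeComplex, imK_coeComplex]
    ring
  exact (sq_eq_sq₀ (norm_nonneg _) (norm_nonneg _)).mp hsq

theorem Quaternion.im_coeComplex_ne_zero {z : ℂ} (hz : z.im ≠ 0) : (z : ℍ[ℝ]).im ≠ 0 :=
  fun h => hz (by simpa using congrArg QuaternionAlgebra.imI h)

theorem HasFDerivAt.hasDerivAt_add_ofReal {E : Type*} [NormedAddCommGroup E] [NormedSpace ℝ E]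
    {f : ℂ → E} {D : ℂ →L[ℝ] E} {z : ℂ} (hf : HasFDerivAt f D z) :
    HasDerivAt (fun t : ℝ => f (z + t)) (D 1) 0 := by
  have hline : HasDerivAt (fun t : ℝ => z + (t : ℂ)) 1 0 := by
    simpa using (Complex.ofRealCLM.hasDerivAt (x := 0)).const_add z
  exact hf.comp_hasDerivAt_of_eq 0 hline (by simp)

theorem HasDerivAt.addMonoidHom_comp {E F : Type*} [NormedAddCommGroup E] [NormedSpace ℝ E]
    [NormedAddCommGroup F] [NormedSpace ℝ F] (φ : E →+ F) (hφ : Continuous φ) {f : ℝ → E}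
    {f' : E} {t : ℝ} (hf : HasDerivAt f f' t) : HasDerivAt (fun s => φ (f s)) (φ f') t :=
  (φ.toRealLinearMap hφ).hasFDerivAt.comp_hasDerivAt t hf

section RightModule

variable {M : Type*} [AddCommGroup M] [Module ℍ[ℝ]ᵐᵒᵖ M]

theorem op_coe_smul_comm (r : ℝ) (a : ℍ[ℝ]ᵐᵒᵖ) (x : M) :
    op (r : ℍ[ℝ]) • a • x = a • op (r : ℍ[ℝ]) • x := by
  rw [smul_smul, smul_smul]
  exact congrArg (· • x) (coe_commute r a.unop).op.eq

/-- `Q_q(T)`; it is `ℍᵐᵒᵖ`-linear because its coefficients are real. -/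
noncomputable def quadraticOp (T : M →ₗ[ℍ[ℝ]ᵐᵒᵖ] M) (q : ℍ[ℝ]) : M →ₗ[ℍ[ℝ]ᵐᵒᵖ] M where
  toFun x := T (T x) - op ((2 * q.re : ℝ) : ℍ[ℝ]) • T x + op ((‖q‖ ^ 2 : ℝ) : ℍ[ℝ]) • x
  map_add' x y := by simp only [map_add, smul_add]; abel
  map_smul' a x := by
    simp only [map_smul, smul_sub, smul_add, RingHom.id_apply, op_coe_smul_comm]

theorem quadraticOp_apply (T : M →ₗ[ℍ[ℝ]ᵐᵒᵖ] M) (q : ℍ[ℝ]) (x : M) :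
    quadraticOp T q x =
      T (T x) - op ((2 * q.re : ℝ) : ℍ[ℝ]) • T x + op ((‖q‖ ^ 2 : ℝ) : ℍ[ℝ]) • x := rfl

/-- `v j` stands for the `j`-th derivative `γ⁽ʲ⁾(q)` of a right eigen-section `γ`, whence the
factor `j` instead of the `1` of a usual Jordan chain. -/
def IsRightJordanChain (T : M →ₗ[ℍ[ℝ]ᵐᵒᵖ] M) (q : ℍ[ℝ]) (v : ℕ → M) : Prop :=
  ∀ j : ℕ, T (v j) = op q • v j + op (j : ℍ[ℝ]) • v (j - 1)

namespace IsRightJordanChain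

variable {T : M →ₗ[ℍ[ℝ]ᵐᵒᵖ] M} {q : ℍ[ℝ]} {v : ℕ → M}

theorem quadraticOp_apply (hv : IsRightJordanChain T q v) (j : ℕ) :
    quadraticOp T q (v j) =
      op (2 * j * q.im) • v (j - 1) + op ((j * (j - 1) : ℕ) : ℍ[ℝ]) • v (j - 2) := by
  have hv' : T (v (j - 1)) = op q • v (j - 1) + op ((j - 1 : ℕ) : ℍ[ℝ]) • v (j - 2) := by
    rw [hv, Nat.sub_sub]
  rw [_root_.quadraticOp_apply, hv, map_add, map_smul, map_smul, hv, hv']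
  simp only [smul_add, smul_smul]
  have two : ((2 : ℝ) : ℍ[ℝ]) = 2 := QuaternionAlgebra.coe_ofNat
  match_scalars <;> apply unop_injective <;>
    simp only [unop_mul, unop_op, unop_sub, unop_add, mul_one, unop_zero]
  · rw [← coe_mul, ← coe_pow, ← coe_commutes]
    exact q.mul_self_sub_two_re_mul_add_norm_sq
  · rw [← (Nat.cast_commute j q).eq, ← q.sub_re_self, two]
    noncomm_ring
  · exact (Nat.cast_commute _ _).eq

theorem quadraticOp_pow_apply_of_lt (hv : IsRightJordanChain T q v) {j m : ℕ} (hjm : j < m) :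
    (quadraticOp T q ^ m) (v j) = 0 := by
  induction m generalizing j with
  | zero => omega
  | succ m ih =>
    rw [pow_succ, Module.End.mul_apply, hv.quadraticOp_apply]
    rcases j with _ | j
    · simp
    · rw [map_add, map_smul, map_smul, ih (by omega), ih (by omega), smul_zero, smul_zero,
        add_zero]

theorem quadraticOp_pow_apply_self (hv : IsRightJordanChain T q v) (j : ℕ) :
    (quadraticOp T q ^ j) (v j) = op (((2 ^ j * j.factorial : ℕ) : ℍ[ℝ]) * q.im ^ j) • v 0 := by
  induction j with
  | zero => simp
  | succ j ih =>
    have hlow : (quadraticOp T q ^ j)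
        (op (((j + 1) * (j + 1 - 1) : ℕ) : ℍ[ℝ]) • v (j + 1 - 2)) = 0 := by
      rcases j with _ | j
      · simp
      · rw [map_smul, hv.quadraticOp_pow_apply_of_lt (by omega), smul_zero]
    rw [pow_succ, Module.End.mul_apply, hv.quadraticOp_apply, map_add, hlow, add_zero, map_smul,
      Nat.add_sub_cancel, ih, smul_smul, ← op_mul,
      show (2 : ℍ[ℝ]) * ((j + 1 : ℕ) : ℍ[ℝ]) = ((2 * (j + 1) : ℕ) : ℍ[ℝ]) by push_cast; rfl,
      mul_assoc, ← mul_assoc (q.im ^ j), ← (Nat.cast_commute _ _).eq, mul_assoc, ← mul_assoc,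
      ← Nat.cast_mul, pow_succ, Nat.factorial_succ, pow_succ]
    congr 4
    ring

end IsRightJordanChain

theorem LinearIndependent.sumElim_of_map_eq_zero {R M N ι κ : Type*} [Ring R] [AddCommGroup M]
    [AddCommGroup N] [Module R M] [Module R N] {f : M →ₗ[R] N} {u : ι → M} {w : κ → M}
    (hu : LinearIndependent R (f ∘ u)) (hw : LinearIndependent R w) (hfw : ∀ k, f (w k) = 0) :
    LinearIndependent R (Sum.elim u w) :=
  hu.of_comp.sum_type hw <| (Submodule.range_ker_disjoint hu).mono_right <|
    Submodule.span_le.mpr <| Set.range_subset_iff.mpr hfw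

theorem linearIndependent_rightJordanChains {T : M →ₗ[ℍ[ℝ]ᵐᵒᵖ] M} {q : ℍ[ℝ]} {ι : Type*}
    {v : ι → ℕ → M} (hv : ∀ i, IsRightJordanChain T q (v i)) (hq : q.im ≠ 0)
    (h0 : LinearIndependent ℍ[ℝ]ᵐᵒᵖ fun i => v i 0) (k : ℕ) :
    LinearIndependent ℍ[ℝ]ᵐᵒᵖ fun p : Fin k × ι => v p.2 p.1 := by
  induction k with
  | zero => exact linearIndependent_empty_type
  | succ k ih =>
    have hc : op (((2 ^ k * k.factorial : ℕ) : ℍ[ℝ]) * q.im ^ k) ≠ 0 := by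
      rw [Ne, op_eq_zero_iff, mul_eq_zero, not_or]
      refine ⟨?_, pow_ne_zero _ hq⟩
      rw [← coe_natCast, ← coe_zero, coe_inj]
      positivity
    have htop : LinearIndependent ℍ[ℝ]ᵐᵒᵖ ((quadraticOp T q ^ k) ∘ fun i => v i k) := by
      convert h0.units_smul (fun _ => Units.mk0 _ hc) using 1
      funext i
      simp [(hv i).quadraticOp_pow_apply_self, Units.smul_def]
    refine (linearIndependent_equiv' ((finSuccEquivLast.prodCongr (Equiv.refl ι)).trans
      optionProdEquiv) ?_).mpr (htop.sumElim_of_map_eq_zero ih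
        fun p => (hv p.2).quadraticOp_pow_apply_of_lt p.1.isLt)
    ext ⟨j, i⟩
    induction j using Fin.lastCases <;> simp

end RightModule

section NormedRightModule

variable {H : Type*} [NormedAddCommGroup H] [NormedSpace ℝ H] [Module ℍ[ℝ]ᵐᵒᵖ H]

theorem HasDerivAt.op_add_smul (hcont : ∀ a : ℍ[ℝ], Continuous fun x : H => op a • x)
    (hreal : ∀ (r : ℝ) (x : H), op ((r : ℍ[ℝ])) • x = r • x) {f : ℝ → H} {f' : H} {t : ℝ}
    (hf : HasDerivAt f f' t) (c : ℍ[ℝ]) :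
    HasDerivAt (fun s : ℝ => op (c + s) • f s) (op (c + t) • f' + f t) t := by
  have hsplit : (fun s : ℝ => op (c + s) • f s) = fun s => op c • f s + s • f s := by
    funext s
    rw [op_add, add_smul, hreal]
  have hc := hf.addMonoidHom_comp (DistribSMul.toAddMonoidHom H (op c)) (hcont c)
  rw [hsplit, op_add, add_smul, hreal, add_assoc]
  convert hc.add ((hasDerivAt_id t).smul hf) using 1
  · rfl
  · simp

theorem isRightJordanChain_of_hasDerivAt (hcont : ∀ a : ℍ[ℝ], Continuous fun x : H => op a • x)
    (hreal : ∀ (r : ℝ) (x : H), op ((r : ℍ[ℝ])) • x = r • x) {Δ : Set ℂ} (hΔ : IsOpen Δ)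
    {T : H →ₗ[ℍ[ℝ]ᵐᵒᵖ] H} (hTcont : Continuous T) {γ : ℕ → ℂ → H}
    (hγ : ∀ k, ∀ z ∈ Δ, HasDerivAt (fun t : ℝ => γ k (z + t)) (γ (k + 1) z) 0)
    (heig : ∀ z ∈ Δ, T (γ 0 z) = op (z : ℍ[ℝ]) • γ 0 z) {z : ℂ} (hz : z ∈ Δ) :
    IsRightJordanChain T z fun k => γ k z := by
  intro k
  induction k generalizing z with
  | zero => simpa using heig z hz
  | succ k ih =>
    have hnear : ∀ᶠ t : ℝ in nhds 0, z + t ∈ Δ :=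
      (continuous_const.add Complex.continuous_ofReal).continuousAt.preimage_mem_nhds
        (by simpa using hΔ.mem_nhds hz)
    have hlhs := (hγ k z hz).addMonoidHom_comp T.toAddMonoidHom hTcont
    have hrhs := ((hγ k z hz).op_add_smul hcont hreal z).add
      ((hγ (k - 1) z hz).addMonoidHom_comp (DistribSMul.toAddMonoidHom H (op (k : ℍ[ℝ])))
        (hcont _))
    have hderiv := hlhs.unique <| hrhs.congr_of_eventuallyEq <| hnear.mono fun t ht => by
      simpa [coeComplex_add] using ih ht
    have hlast : op (k : ℍ[ℝ]) • γ (k - 1 + 1) z = op (k : ℍ[ℝ]) • γ k z := by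
      rcases k with _ | k <;> simp
    simp only [LinearMap.toAddMonoidHom_coe, DistribSMul.toAddMonoidHom_apply,
      Complex.ofReal_zero, add_zero, coe_zero, hlast] at hderiv
    rw [hderiv, Nat.add_sub_cancel, add_assoc, ← one_smul ℍ[ℝ]ᵐᵒᵖ (γ k z), smul_smul, ← add_smul,
      mul_one, Nat.cast_succ, op_add, op_one, add_comm (1 : ℍ[ℝ]ᵐᵒᵖ)]

end NormedRightModule

theorem rightHolomorphic_frame_derivatives_independent_general {H : Type*} [NormedAddCommGroup H]
    [NormedSpace ℝ H] [Module ℍ[ℝ]ᵐᵒᵖ H]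
    (hcont : ∀ a : ℍ[ℝ], Continuous fun x : H => op a • x)
    (hreal : ∀ (r : ℝ) (x : H), op ((r : ℍ[ℝ])) • x = r • x)
    (Δ : Set ℂ) (hΔ : IsOpen Δ)
    (T : H →ₗ[ℍ[ℝ]ᵐᵒᵖ] H) (hTcont : Continuous T)
    (n : ℕ) (g : Fin n → ℕ → ℂ → H)
    (hg : ∀ (i : Fin n) (k : ℕ), ∀ z ∈ Δ, ∃ D : ℂ →L[ℝ] H, HasFDerivAt (g i k) D z ∧
      D 1 = g i (k + 1) z ∧ D Complex.I = op ((Complex.I : ℂ) : ℍ[ℝ]) • g i (k + 1) z)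
    (heig : ∀ (i : Fin n), ∀ ω ∈ Δ, T (g i 0 ω) = op ((ω : ℍ[ℝ])) • g i 0 ω)
    (ω₀ : ℂ) (hω₀ : ω₀ ∈ Δ) (him : ω₀.im ≠ 0)
    (hind : ∀ a : Fin n → ℍ[ℝ], (∑ i, op (a i) • g i 0 ω₀) = 0 → ∀ i, a i = 0) :
    ∀ k : ℕ, 1 ≤ k →
      (∀ a : Fin n → Fin k → ℍ[ℝ],
        (∑ i, ∑ j, op (a i j) • g i (j : ℕ) ω₀) = 0 → ∀ i j, a i j = 0) ∧
      (∀ (i : Fin n) (j : Fin k),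
        (fun x : H => T (T x) - op ((2 * ω₀.re : ℝ) : ℍ[ℝ]) • T x
          + op ((‖ω₀‖ ^ 2 : ℝ) : ℍ[ℝ]) • x)^[k] (g i (j : ℕ) ω₀) = 0) := by
  intro k _
  have hchain (i : Fin n) : IsRightJordanChain T ω₀ fun j => g i j ω₀ :=
    isRightJordanChain_of_hasDerivAt hcont hreal hΔ hTcont (fun j z hz => by
      obtain ⟨D, hD, hD1, -⟩ := hg i j z hz
      exact hD1 ▸ hD.hasDerivAt_add_ofReal) (heig i) hω₀
  have hbase : LinearIndependent ℍ[ℝ]ᵐᵒᵖ fun i => g i 0 ω₀ :=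
    Fintype.linearIndependent_iff.mpr fun a ha i => by simpa using hind (unop ∘ a) ha i
  have hli := linearIndependent_rightJordanChains hchain (im_coeComplex_ne_zero him) hbase k
  have hQ : (fun x : H => T (T x) - op ((2 * ω₀.re : ℝ) : ℍ[ℝ]) • T x
      + op ((‖ω₀‖ ^ 2 : ℝ) : ℍ[ℝ]) • x) = quadraticOp T ω₀ := by
    funext x
    rw [quadraticOp_apply, re_coeComplex, norm_coeComplex_s16]
  refine ⟨fun a ha i j => ?_, fun i j => ?_⟩
  · have := Fintype.linearIndependent_iff.mp hli (fun p => op (a p.2 p.1))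
      (by rw [Fintype.sum_prod_type, Finset.sum_comm]; exact ha) (j, i)
    simpa using this
  · rw [hQ, ← Module.End.coe_pow]
    exact (hchain i).quadraticOp_pow_apply_of_lt j.isLt

/-- If `γ₁, …, γ_n` (given with their iterated derivative families
`g i k`) are right holomorphic eigen-sections of `T` on `Δ`, and the values
`γ₁(ω₀), …, γ_n(ω₀)` at a point `ω₀ ∈ Δ` with `Im ω₀ ≠ 0` are right `ℍ`-linearly
independent, then for every `k ≥ 1` the `n·k` vectors `γᵢ⁽ʲ⁾(ω₀)` (`0 ≤ j ≤ k−1`) are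
right `ℍ`-linearly independent and all lie in `ker (Q_{ω₀}(T))^k`. -/
theorem rightHolomorphic_frame_derivatives_independent {H : Type*} [NormedAddCommGroup H]
    [NormedSpace ℝ H] [Module ℍ[ℝ]ᵐᵒᵖ H]
    (hcont : ∀ a : ℍ[ℝ], Continuous fun x : H => op a • x)
    (hlinR : ∀ (a : ℍ[ℝ]) (r : ℝ) (x : H), op a • (r • x) = r • (op a • x))
    (hreal : ∀ (r : ℝ) (x : H), op ((r : ℍ[ℝ])) • x = r • x)
    (Δ : Set ℂ) (hΔ : IsOpen Δ)
    (T : H →ₗ[ℍ[ℝ]ᵐᵒᵖ] H) (hTcont : Continuous T)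
    (n : ℕ) (g : Fin n → ℕ → ℂ → H)
    (hg : ∀ (i : Fin n) (k : ℕ), ∀ z ∈ Δ, ∃ D : ℂ →L[ℝ] H, HasFDerivAt (g i k) D z ∧
      D 1 = g i (k + 1) z ∧ D Complex.I = op ((Complex.I : ℂ) : ℍ[ℝ]) • g i (k + 1) z)
    (heig : ∀ (i : Fin n), ∀ ω ∈ Δ, T (g i 0 ω) = op ((ω : ℍ[ℝ])) • g i 0 ω)
    (ω₀ : ℂ) (hω₀ : ω₀ ∈ Δ) (him : ω₀.im ≠ 0)
    (hind : ∀ a : Fin n → ℍ[ℝ], (∑ i, op (a i) • g i 0 ω₀) = 0 → ∀ i, a i = 0) :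
    ∀ k : ℕ, 1 ≤ k →
      (∀ a : Fin n → Fin k → ℍ[ℝ],
        (∑ i, ∑ j, op (a i j) • g i (j : ℕ) ω₀) = 0 → ∀ i j, a i j = 0) ∧
      (∀ (i : Fin n) (j : Fin k),
        (fun x : H => T (T x) - op ((2 * ω₀.re : ℝ) : ℍ[ℝ]) • T x
          + op ((‖ω₀‖ ^ 2 : ℝ) : ℍ[ℝ]) • x)^[k] (g i (j : ℕ) ω₀) = 0) :=
  rightHolomorphic_frame_derivatives_independent_general hcont hreal Δ hΔ T hTcont n g hg heig ω₀
    hω₀ him hind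
end

section
/- Let Δ ⊆ ℂ be open and H a real normed space carrying a compatible right quaternionic module structure (as in the context). Let γ : Δ → H be right holomorphic with γ(ω) ≠ 0 for all ω ∈ Δ, let f : Δ → ℂ be Fréchet differentiable over ℝ, and suppose the map γ̃ : Δ → H defined by γ̃(ω) = γ(ω)•f(ω) is right holomorphic. Then f is holomorphic on Δ. (Two right holomorphic frames of a one-dimensional Hermitian right holomorphic quaternionic vector bundle differ by a complex-valued holomorphic function.) -/
open Quaternion MulOpposite

/-! Complex scalars commute in `ℍ`, so the right action of `ℂ ⊆ ℍ` on `H` commutes with the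
action of `𝐢`. Hence by the Leibniz rule
`D(γ • f)(𝐢) - D(γ • f)(1) • 𝐢 = (Dγ(𝐢) - Dγ(1) • 𝐢) • f + γ • (Df(𝐢) - 𝐢 Df(1))`.
The first term vanishes since `γ` is right holomorphic; as `γ ≠ 0` and `ℍ` is a division ring,
right holomorphy of `γ • f` is then exactly the Cauchy–Riemann equation `Df(𝐢) = 𝐢 Df(1)`. -/

section Algebra

variable {H : Type*} [AddCommGroup H] [Module ℍ[ℝ]ᵐᵒᵖ H]

theorem isScalarTower_of_op_real_smul [Module ℝ H] [SMulCommClass ℍ[ℝ]ᵐᵒᵖ ℝ H]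
    (hreal : ∀ (r : ℝ) (x : H), op ((r : ℍ[ℝ])) • x = r • x) : IsScalarTower ℝ ℍ[ℝ]ᵐᵒᵖ H where
  smul_assoc r a x := by
    rw [← op_unop a, ← op_smul, Algebra.smul_def, op_mul, mul_smul, Quaternion.algebraMap_def,
      hreal, smul_comm]

theorem op_coe_smul_op_coe_smul (v w : ℂ) (x : H) :
    op (v : ℍ[ℝ]) • op (w : ℍ[ℝ]) • x = op ((v * w : ℂ) : ℍ[ℝ]) • x := by
  rw [smul_smul, ← op_mul, ← coeComplex_mul, mul_comm]

end Algebra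

section Calculus

variable {H : Type*} [NormedAddCommGroup H] [NormedSpace ℝ H] [Module ℍ[ℝ]ᵐᵒᵖ H]

theorem cauchyRiemann_of_op_smul {w : ℂ} {x : H} {Dγ : ℂ →L[ℝ] H} {Df : ℂ →L[ℝ] ℂ}
    (hx : x ≠ 0) (hγ : Dγ Complex.I = op (Complex.I : ℍ[ℝ]) • Dγ 1)
    (hγf : op (w : ℍ[ℝ]) • Dγ Complex.I + op (Df Complex.I : ℍ[ℝ]) • x =
      op (Complex.I : ℍ[ℝ]) • (op (w : ℍ[ℝ]) • Dγ 1 + op (Df 1 : ℍ[ℝ]) • x)) :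
    Df Complex.I = Complex.I • Df 1 := by
  rw [smul_add, op_coe_smul_op_coe_smul, mul_comm, ← op_coe_smul_op_coe_smul, ← hγ,
    op_coe_smul_op_coe_smul] at hγf
  have hcoe : (Df Complex.I : ℍ[ℝ]) = ((Complex.I • Df 1 : ℂ) : ℍ[ℝ]) := by
    by_contra hne
    have hsub : op ((Df Complex.I : ℍ[ℝ]) - ((Complex.I • Df 1 : ℂ) : ℍ[ℝ])) • x = 0 := by
      rw [op_sub, sub_smul, smul_eq_mul, add_left_cancel hγf, sub_self]
    exact hx ((smul_eq_zero.mp hsub).resolve_left (op_ne_zero_iff _ |>.mpr (sub_ne_zero.mpr hne)))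
  exact ofComplex.toRingHom.injective hcoe

variable [SMulCommClass ℍ[ℝ]ᵐᵒᵖ ℝ H] [ContinuousConstSMul ℍ[ℝ]ᵐᵒᵖ H] [IsScalarTower ℝ ℍ[ℝ]ᵐᵒᵖ H]

variable (H) in
noncomputable def opSMulBilin : ℍ[ℝ] →L[ℝ] H →L[ℝ] H :=
  LinearMap.toContinuousLinearMap
    { toFun := fun a => { DistribSMul.toLinearMap ℝ H (op a) with cont := continuous_const_smul _ }
      map_add' a b := ContinuousLinearMap.ext fun x => add_smul (op a) (op b) x
      map_smul' r a := ContinuousLinearMap.ext fun x => smul_assoc r (op a) x }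

@[simp]
theorem opSMulBilin_apply (a : ℍ[ℝ]) (x : H) : opSMulBilin H a x = op a • x := rfl

theorem HasFDerivAt.op_smul {E : Type*} [NormedAddCommGroup E] [NormedSpace ℝ E]
    {q : E → ℍ[ℝ]} {γ : E → H} {q' : E →L[ℝ] ℍ[ℝ]} {γ' : E →L[ℝ] H} {z : E}
    (hq : HasFDerivAt q q' z) (hγ : HasFDerivAt γ γ' z) :
    HasFDerivAt (fun ω => op (q ω) • γ ω)
      ((opSMulBilin H (q z)).comp γ' + ((opSMulBilin H).flip (γ z)).comp q') z :=
  (opSMulBilin H).hasFDerivAt_of_bilinear hq hγ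

end Calculus

noncomputable def Quaternion.ofComplexCLM : ℂ →L[ℝ] ℍ[ℝ] :=
  LinearMap.toContinuousLinearMap ofComplex.toLinearMap

@[simp]
theorem Quaternion.ofComplexCLM_apply (v : ℂ) : ofComplexCLM v = (v : ℍ[ℝ]) := rfl

theorem frame_transition_is_holomorphic_general {H : Type*} [NormedAddCommGroup H]
    [NormedSpace ℝ H] [Module ℍ[ℝ]ᵐᵒᵖ H]
    (hcont : ∀ a : ℍ[ℝ], Continuous fun x : H => op a • x)
    (hlinR : ∀ (a : ℍ[ℝ]) (r : ℝ) (x : H), op a • (r • x) = r • (op a • x))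
    (hreal : ∀ (r : ℝ) (x : H), op ((r : ℍ[ℝ])) • x = r • x)
    (Δ : Set ℂ)
    (γ : ℂ → H)
    (hγ : ∀ z ∈ Δ, ∃ D : ℂ →L[ℝ] H, HasFDerivAt γ D z ∧
      D Complex.I = op ((Complex.I : ℂ) : ℍ[ℝ]) • D 1)
    (hγ0 : ∀ z ∈ Δ, γ z ≠ 0)
    (f : ℂ → ℂ) (hf : ∀ z ∈ Δ, DifferentiableAt ℝ f z)
    (hγf : ∀ z ∈ Δ, ∃ D : ℂ →L[ℝ] H,
      HasFDerivAt (fun ω : ℂ => op ((f ω : ℍ[ℝ])) • γ ω) D z ∧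
      D Complex.I = op ((Complex.I : ℂ) : ℍ[ℝ]) • D 1) :
    ∀ z ∈ Δ, DifferentiableAt ℂ f z := by
  have : SMulCommClass ℍ[ℝ]ᵐᵒᵖ ℝ H := ⟨fun a r x => hlinR a.unop r x⟩
  have : ContinuousConstSMul ℍ[ℝ]ᵐᵒᵖ H := ⟨fun a => hcont a.unop⟩
  have := isScalarTower_of_op_real_smul hreal
  intro z hz
  obtain ⟨Dγ, hDγ, hDγI⟩ := hγ z hz
  obtain ⟨D, hD, hDI⟩ := hγf z hz
  have hDf := (hf z hz).hasFDerivAt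
  rw [hD.unique ((ofComplexCLM.hasFDerivAt.comp z hDf).op_smul hDγ)] at hDI
  refine differentiableAt_complex_iff_differentiableAt_real.2 ⟨hf z hz, ?_⟩
  exact cauchyRiemann_of_op_smul (hγ0 z hz) hDγI (by simpa using hDI)

/-- If `γ : Δ → H` is right holomorphic and nowhere vanishing on the
open set `Δ`, `f : Δ → ℂ` is ℝ-Fréchet differentiable, and `ω ↦ γ(ω) • f(ω)` is right
holomorphic, then `f` is holomorphic on `Δ`. -/
theorem frame_transition_is_holomorphic {H : Type*} [NormedAddCommGroup H]
    [NormedSpace ℝ H] [Module ℍ[ℝ]ᵐᵒᵖ H]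
    (hcont : ∀ a : ℍ[ℝ], Continuous fun x : H => op a • x)
    (hlinR : ∀ (a : ℍ[ℝ]) (r : ℝ) (x : H), op a • (r • x) = r • (op a • x))
    (hreal : ∀ (r : ℝ) (x : H), op ((r : ℍ[ℝ])) • x = r • x)
    (Δ : Set ℂ) (hΔ : IsOpen Δ)
    (γ : ℂ → H)
    (hγ : ∀ z ∈ Δ, ∃ D : ℂ →L[ℝ] H, HasFDerivAt γ D z ∧
      D Complex.I = op ((Complex.I : ℂ) : ℍ[ℝ]) • D 1)
    (hγ0 : ∀ z ∈ Δ, γ z ≠ 0)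
    (f : ℂ → ℂ) (hf : ∀ z ∈ Δ, DifferentiableAt ℝ f z)
    (hγf : ∀ z ∈ Δ, ∃ D : ℂ →L[ℝ] H,
      HasFDerivAt (fun ω : ℂ => op ((f ω : ℍ[ℝ])) • γ ω) D z ∧
      D Complex.I = op ((Complex.I : ℂ) : ℍ[ℝ]) • D 1) :
    ∀ z ∈ Δ, DifferentiableAt ℂ f z :=
  frame_transition_is_holomorphic_general hcont hlinR hreal Δ γ hγ hγ0 f hf hγf
end

section
/- Define operators T and T̃ on ℓ²(ℕ, ℍ) by: (Tx)₀ = 𝐢·x₀ + (1+2𝐣𝐢)·x₁ + (1+𝐣)·x₂ and (Tx)_n = 𝐢·x_n + x_{n+1} for n ≥ 1; (T̃x)₀ = 𝐢·x₀ + (1/2 − (1/2)𝐣)·x₁ + x₂, (T̃x)₁ = (𝐣𝐢)·x₁ + (1+𝐣)·x₂, and (T̃x)_n = 𝐢·x_n + x_{n+1} for n ≥ 2 (all coefficients multiplied on the left). Then: (1) for every ω ∈ ℂ with |ω − 𝐢| < 1, ‖γ(ω)‖ = ‖γ̃(ω)‖, where γ(ω) = (1+(1+𝐣)(ω−𝐢),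 (ω−𝐢), (ω−𝐢)², (ω−𝐢)³, …) and γ̃(ω) = (1+(ω−𝐢), (1+𝐣)(ω−𝐢), (ω−𝐢)², (ω−𝐢)³, …) are the respective right holomorphic frames (so the associated bundles have the same curvature); and (2) there is no surjective right ℍ-linear isometry U of ℓ²(ℕ, ℍ) with U∘T = T̃∘U, i.e. T and T̃ are not quaternion unitarily equivalent. -/
/-!
Part (1): the two frames agree from coordinate 2 on, and for complex `z` the quaternion `𝐣z`
is orthogonal to `ℂ`, so in coordinates 0 and 1 both frames contribute `|1 + z|² + 2|z|²`.

Part (2): if `T̃x = x𝐢 + w` with `w` supported at `0`, then from coordinate 2 on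
`x (n+1) = x n 𝐢 − 𝐢 x n`; this map kills the complex part and doubles the `𝐣𝐤`-part, so
square summability forces `x n = 0` for `n ≥ 3` and `x 2 ∈ ℂ`. Rows 1 and 0 then give `x 2 = 0`
and `|x 1|² = 2|p (w 0)|²`, where `p : ℍ → ℂ` is the orthogonal projection. An intertwining
unitary `U` sends `e₀` (where `Te₀ = e₀𝐢`) to `y = y₀e₀` with `y₀ ∈ ℂ`, `|y₀| = 1`, and `e₁`
(where `Te₁ = e₁𝐢 + e₀(1 + 2𝐣𝐢)`) to a unit vector `w` with `|w 1|² = 2|y₀|² = 2`.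
-/

open Quaternion MulOpposite

def qI : ℍ[ℝ] := ⟨0, 1, 0, 0⟩

def qJ : ℍ[ℝ] := ⟨0, 0, 1, 0⟩

open Filter Topology

@[simp] theorem qI_re : qI.re = 0 := rfl
@[simp] theorem qI_imI : qI.imI = 1 := rfl
@[simp] theorem qI_imJ : qI.imJ = 0 := rfl
@[simp] theorem qI_imK : qI.imK = 0 := rfl
@[simp] theorem qJ_re : qJ.re = 0 := rfl
@[simp] theorem qJ_imI : qJ.imI = 0 := rfl
@[simp] theorem qJ_imJ : qJ.imJ = 1 := rfl
@[simp] theorem qJ_imK : qJ.imK = 0 := rfl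

theorem lp.hasSum_norm_sq {ι : Type*} {E : ι → Type*} [∀ i, NormedAddCommGroup (E i)]
    (f : lp E 2) : HasSum (fun i => ‖f i‖ ^ 2) (‖f‖ ^ 2) := by
  simpa using lp.hasSum_norm (p := 2) (by simp) f

theorem lp.norm_eq_of_sum_range_eq {E : ℕ → Type*} [∀ i, NormedAddCommGroup (E i)]
    {u v : lp E 2} (N : ℕ)
    (hhead : ∑ n ∈ Finset.range N, ‖u n‖ ^ 2 = ∑ n ∈ Finset.range N, ‖v n‖ ^ 2)
    (htail : ∀ n, N ≤ n → u n = v n) : ‖u‖ = ‖v‖ := by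
  have hu := (hasSum_nat_add_iff' N).2 (lp.hasSum_norm_sq u)
  have hv := (hasSum_nat_add_iff' N).2 (lp.hasSum_norm_sq v)
  simp only [fun n => htail (n + N) (Nat.le_add_left N n)] at hu
  have := hu.unique hv
  rw [hhead, sub_left_inj] at this
  exact (pow_left_inj₀ (norm_nonneg u) (norm_nonneg v) two_ne_zero).1 this

theorem Quaternion.sq_norm_eq (q : ℍ[ℝ]) :
    ‖q‖ ^ 2 = q.re ^ 2 + q.imI ^ 2 + q.imJ ^ 2 + q.imK ^ 2 := by
  rw [sq, ← normSq_eq_norm_mul_self, normSq_def']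

theorem sq_norm_one_add_mul_add_sq_norm {z : ℍ[ℝ]} (hJ : z.imJ = 0) (hK : z.imK = 0) :
    ‖1 + (1 + qJ) * z‖ ^ 2 + ‖z‖ ^ 2 = ‖1 + z‖ ^ 2 + ‖(1 + qJ) * z‖ ^ 2 := by
  simp only [Quaternion.sq_norm_eq, re_add, imI_add, imJ_add, imK_add, re_mul, imI_mul, imJ_mul,
    imK_mul, re_one, imI_one, imJ_one, imK_one, qJ_re, qJ_imI, qJ_imJ, qJ_imK, hJ, hK]
  ring

-- `simp` cannot read off the components of `(2 : ℍ[ℝ])⁻¹` itself.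
theorem Quaternion.inv_two_eq_coe : (2⁻¹ : ℍ[ℝ]) = ((2⁻¹ : ℝ) : ℍ[ℝ]) := by
  rw [coe_inv]; rfl

theorem mul_qI_sub_qI_mul (q : ℍ[ℝ]) : q * qI - qI * q = ⟨0, 0, 2 * q.imK, -(2 * q.imJ)⟩ := by
  ext <;> simp <;> ring

theorem tail_eq_zero_of_mul_qI_sub_qI_mul {f : ℕ → ℍ[ℝ]}
    (hf : Tendsto (fun n => ‖f n‖ ^ 2) atTop (𝓝 0)) {N : ℕ}
    (hrec : ∀ n, N ≤ n → f (n + 1) = f n * qI - qI * f n) :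
    (f N).imJ = 0 ∧ (f N).imK = 0 ∧ ∀ n, N < n → f n = 0 := by
  let m : ℍ[ℝ] → ℝ := fun q => q.imJ ^ 2 + q.imK ^ 2
  have hm_mono : ∀ k, m (f N) ≤ m (f (N + k)) := by
    intro k
    induction k with
    | zero => rfl
    | succ k ih =>
      rw [← add_assoc, hrec _ (Nat.le_add_right N k), mul_qI_sub_qI_mul]
      simp only [m] at ih ⊢
      nlinarith [sq_nonneg (f (N + k)).imJ, sq_nonneg (f (N + k)).imK]
  have hm_le : ∀ n, m (f n) ≤ ‖f n‖ ^ 2 := fun n => by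
    rw [Quaternion.sq_norm_eq]; nlinarith [sq_nonneg (f n).re, sq_nonneg (f n).imI]
  have hm_zero : m (f N) ≤ 0 :=
    ge_of_tendsto' (hf.comp (tendsto_add_atTop_nat N))
      fun k => (hm_mono k).trans (by simpa [add_comm] using hm_le (N + k))
  have hJ : (f N).imJ = 0 := by nlinarith [sq_nonneg (f N).imJ, sq_nonneg (f N).imK]
  have hK : (f N).imK = 0 := by nlinarith [sq_nonneg (f N).imJ, sq_nonneg (f N).imK]
  refine ⟨hJ, hK, fun n hn => ?_⟩
  induction n, hn using Nat.le_induction with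
  | base => rw [hrec N le_rfl, mul_qI_sub_qI_mul, hJ, hK]; ext <;> simp
  | succ n hn ih => rw [hrec n (by omega), ih]; simp

theorem tildeT_row_one {x₁ x₂ : ℍ[ℝ]} (hJ : x₂.imJ = 0) (hK : x₂.imK = 0)
    (h : qJ * qI * x₁ + (1 + qJ) * x₂ = x₁ * qI) :
    x₂ = 0 ∧ x₁.imJ = x₁.re ∧ x₁.imK = -x₁.imI := by
  have e1 := congrArg QuaternionAlgebra.re h
  have e2 := congrArg QuaternionAlgebra.imI h
  have e3 := congrArg QuaternionAlgebra.imJ h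
  have e4 := congrArg QuaternionAlgebra.imK h
  simp only [re_add, imI_add, imJ_add, imK_add, re_mul, imI_mul, imJ_mul, imK_mul, re_one, imI_one,
    imJ_one, imK_one, qI_re, qI_imI, qI_imJ, qI_imK, qJ_re, qJ_imI, qJ_imJ, qJ_imK, hJ, hK]
    at e1 e2 e3 e4
  refine ⟨?_, by linarith, by linarith⟩
  ext <;> simp [hJ, hK] <;> linarith

theorem tildeT_row_zero {x₀ x₁ w : ℍ[ℝ]} (hJ : x₁.imJ = x₁.re) (hK : x₁.imK = -x₁.imI)
    (h : qI * x₀ + (1 / 2 - 1 / 2 * qJ) * x₁ = x₀ * qI + w) :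
    x₁.re = w.re ∧ x₁.imI = w.imI ∧ x₀.imJ = w.imK / 2 ∧ x₀.imK = -(w.imJ / 2) := by
  have e1 := congrArg QuaternionAlgebra.re h
  have e2 := congrArg QuaternionAlgebra.imI h
  have e3 := congrArg QuaternionAlgebra.imJ h
  have e4 := congrArg QuaternionAlgebra.imK h
  simp only [one_div, inv_two_eq_coe, re_add, imI_add, imJ_add, imK_add, re_sub, imI_sub, imJ_sub,
    imK_sub, re_mul, imI_mul, imJ_mul, imK_mul, re_coe, imI_coe, imJ_coe, imK_coe, qI_re, qI_imI,
    qI_imJ, qI_imK, qJ_re, qJ_imI, qJ_imJ, qJ_imK, hJ, hK] at e1 e2 e3 e4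
  exact ⟨by linarith, by linarith, by linarith, by linarith⟩

local notation "ℓ²ℍ" => lp (fun _ : ℕ => ℍ[ℝ]) 2

@[simp] theorem lp.op_smul_apply (c : ℍ[ℝ]) (x : ℓ²ℍ) (n : ℕ) : (op c • x) n = x n * c := rfl

theorem tildeT_generalized_eigenvector {Tt : ℓ²ℍ → ℓ²ℍ}
    (hTt0 : ∀ x : ℓ²ℍ, Tt x 0 = qI * x 0 + ((1 / 2 : ℍ[ℝ]) - (1 / 2 : ℍ[ℝ]) * qJ) * x 1 + x 2)
    (hTt1 : ∀ x : ℓ²ℍ, Tt x 1 = (qJ * qI) * x 1 + (1 + qJ) * x 2)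
    (hTtn : ∀ (x : ℓ²ℍ) (n : ℕ), 2 ≤ n → Tt x n = qI * x n + x (n + 1))
    {x w : ℓ²ℍ} (hx : Tt x = op qI • x + w) (hw : ∀ n, 1 ≤ n → w n = 0) :
    ‖x 1‖ ^ 2 = 2 * ((w 0).re ^ 2 + (w 0).imI ^ 2) ∧ (x 0).imJ = (w 0).imK / 2 ∧
      (x 0).imK = -((w 0).imJ / 2) ∧ ∀ n, 2 ≤ n → x n = 0 := by
  have hrow : ∀ n, Tt x n = x n * qI + w n := fun n => by rw [hx]; rfl
  have hrec : ∀ n, 2 ≤ n → x (n + 1) = x n * qI - qI * x n := fun n hn => by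
    rw [eq_sub_iff_add_eq', ← hTtn x n hn, hrow, hw n (by omega), add_zero]
  obtain ⟨h2J, h2K, htail⟩ := tail_eq_zero_of_mul_qI_sub_qI_mul
    (lp.hasSum_norm_sq x).summable.tendsto_atTop_zero hrec
  obtain ⟨hx2, h1J, h1K⟩ := tildeT_row_one h2J h2K (by rw [← hTt1, hrow, hw 1 le_rfl, add_zero])
  obtain ⟨h1re, h1imI, h0J, h0K⟩ := tildeT_row_zero h1J h1K (by rw [← hrow, hTt0, hx2, add_zero])
  refine ⟨?_, h0J, h0K, fun n hn => ?_⟩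
  · rw [Quaternion.sq_norm_eq, h1J, h1K, h1re, h1imI]; ring
  rcases hn.eq_or_lt with rfl | hn
  exacts [hx2, htail n hn]

theorem T_apply_single_zero {T : ℓ²ℍ → ℓ²ℍ}
    (hT0 : ∀ x : ℓ²ℍ, T x 0 = qI * x 0 + (1 + 2 * (qJ * qI)) * x 1 + (1 + qJ) * x 2)
    (hTn : ∀ (x : ℓ²ℍ) (n : ℕ), 1 ≤ n → T x n = qI * x n + x (n + 1)) :
    T (lp.single 2 0 1) = op qI • lp.single 2 0 1 := by
  ext1; funext n
  rw [lp.op_smul_apply]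
  rcases n with _ | n
  · simp [hT0]
  · simp [hTn]

theorem T_apply_single_one {T : ℓ²ℍ → ℓ²ℍ}
    (hT0 : ∀ x : ℓ²ℍ, T x 0 = qI * x 0 + (1 + 2 * (qJ * qI)) * x 1 + (1 + qJ) * x 2)
    (hTn : ∀ (x : ℓ²ℍ) (n : ℕ), 1 ≤ n → T x n = qI * x n + x (n + 1)) :
    T (lp.single 2 1 1) = op qI • lp.single 2 1 1 + op (1 + 2 * (qJ * qI)) • lp.single 2 0 1 := by
  ext1; funext n
  rw [lp.coeFn_add, Pi.add_apply, lp.op_smul_apply, lp.op_smul_apply]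
  rcases n with _ | _ | n
  · simp [hT0]
  · simp [hTn]
  · simp [hTn]

theorem tildeT_eigenvector {Tt : ℓ²ℍ → ℓ²ℍ}
    (hTt0 : ∀ x : ℓ²ℍ, Tt x 0 = qI * x 0 + ((1 / 2 : ℍ[ℝ]) - (1 / 2 : ℍ[ℝ]) * qJ) * x 1 + x 2)
    (hTt1 : ∀ x : ℓ²ℍ, Tt x 1 = (qJ * qI) * x 1 + (1 + qJ) * x 2)
    (hTtn : ∀ (x : ℓ²ℍ) (n : ℕ), 2 ≤ n → Tt x n = qI * x n + x (n + 1))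
    {y : ℓ²ℍ} (hy : Tt y = op qI • y) :
    y = lp.single 2 0 (y 0) ∧ (y 0).imJ = 0 ∧ (y 0).imK = 0 := by
  obtain ⟨hy1, hy0J, hy0K, htail⟩ :=
    tildeT_generalized_eigenvector hTt0 hTt1 hTtn (w := 0) (by rw [hy, add_zero]) fun _ _ => rfl
  refine ⟨?_, by simpa using hy0J, by simpa using hy0K⟩
  ext1; funext n
  rcases n with _ | _ | n
  · simp
  · simpa using hy1
  · simp [htail]

/-- The two explicit operators `T`, `T̃` on `ℓ²(ℕ, ℍ)` have right
holomorphic frames `γ`, `γ̃` of the same norm at every `ω` with `|ω − 𝐢| < 1` (hence the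
associated bundles have the same curvature), yet `T` and `T̃` are not quaternion
unitarily equivalent. -/
theorem same_curvature_not_unitarilyEquivalent :
    (∀ ω : ℂ, ‖ω - Complex.I‖ < 1 →
      ∀ u v : lp (fun _ : ℕ => ℍ[ℝ]) 2,
        ((u : ∀ _ : ℕ, ℍ[ℝ]) 0 = 1 + (1 + qJ) * ((ω : ℍ[ℝ]) - qI)) →
        (∀ n : ℕ, 1 ≤ n → u n = ((ω : ℍ[ℝ]) - qI) ^ n) →
        ((v : ∀ _ : ℕ, ℍ[ℝ]) 0 = 1 + ((ω : ℍ[ℝ]) - qI)) →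
        (v 1 = (1 + qJ) * ((ω : ℍ[ℝ]) - qI)) →
        (∀ n : ℕ, 2 ≤ n → v n = ((ω : ℍ[ℝ]) - qI) ^ n) →
        ‖u‖ = ‖v‖) ∧
    (∀ T Tt : lp (fun _ : ℕ => ℍ[ℝ]) 2 → lp (fun _ : ℕ => ℍ[ℝ]) 2,
      (∀ x : lp (fun _ : ℕ => ℍ[ℝ]) 2,
        (T x : ∀ _ : ℕ, ℍ[ℝ]) 0 = qI * x 0 + (1 + 2 * (qJ * qI)) * x 1 + (1 + qJ) * x 2) →
      (∀ (x : lp (fun _ : ℕ => ℍ[ℝ]) 2) (n : ℕ), 1 ≤ n → T x n = qI * x n + x (n + 1)) →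
      (∀ x : lp (fun _ : ℕ => ℍ[ℝ]) 2,
        (Tt x : ∀ _ : ℕ, ℍ[ℝ]) 0
          = qI * x 0 + ((1 / 2 : ℍ[ℝ]) - (1 / 2 : ℍ[ℝ]) * qJ) * x 1 + x 2) →
      (∀ x : lp (fun _ : ℕ => ℍ[ℝ]) 2, (Tt x : ∀ _ : ℕ, ℍ[ℝ]) 1
          = (qJ * qI) * x 1 + (1 + qJ) * x 2) →
      (∀ (x : lp (fun _ : ℕ => ℍ[ℝ]) 2) (n : ℕ), 2 ≤ n → Tt x n = qI * x n + x (n + 1)) →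
      ¬ ∃ U : lp (fun _ : ℕ => ℍ[ℝ]) 2 ≃ₗᵢ[ℍ[ℝ]ᵐᵒᵖ] lp (fun _ : ℕ => ℍ[ℝ]) 2,
          ∀ x, U (T x) = Tt (U x)) := by
  refine ⟨fun ω _ u v hu0 hu hv0 hv1 hv => ?_, fun T Tt hT0 hTn hTt0 hTt1 hTtn => ?_⟩
  · refine lp.norm_eq_of_sum_range_eq 2 ?_ fun n hn => by rw [hu n (by omega), hv n hn]
    simp only [Finset.sum_range_succ, Finset.sum_range_zero, zero_add, hu0, hu 1 le_rfl, hv0, hv1,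
      pow_one]
    exact sq_norm_one_add_mul_add_sq_norm (by simp [imJ_coeComplex]) (by simp [imK_coeComplex])
  · rintro ⟨U, hU⟩
    have hTy : Tt (U (lp.single 2 0 1)) = op qI • U (lp.single 2 0 1) := by
      rw [← hU, T_apply_single_zero hT0 hTn, map_smul]
    have hTw : Tt (U (lp.single 2 1 1)) =
        op qI • U (lp.single 2 1 1) + op (1 + 2 * (qJ * qI)) • U (lp.single 2 0 1) := by
      rw [← hU, T_apply_single_one hT0 hTn, map_add, map_smul, map_smul]
    have hy_norm : ‖U (lp.single 2 0 1)‖ = 1 := by rw [U.norm_map, lp.norm_single two_pos, norm_one]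
    have hw_norm : ‖U (lp.single 2 1 1)‖ = 1 := by rw [U.norm_map, lp.norm_single two_pos, norm_one]
    generalize U (lp.single 2 0 1) = y at *
    generalize U (lp.single 2 1 1) = w at *
    obtain ⟨hy, hy0J, hy0K⟩ := tildeT_eigenvector hTt0 hTt1 hTtn hTy
    obtain ⟨hw1, -⟩ := tildeT_generalized_eigenvector hTt0 hTt1 hTtn hTw fun n hn => by
      rw [lp.op_smul_apply, hy, lp.single_apply_ne 2 0 _ (by omega), zero_mul]
    have hw1_sq : ‖w 1‖ ^ 2 = 2 * ‖y 0‖ ^ 2 := by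
      rw [hw1, lp.op_smul_apply, two_mul (qJ * qI), Quaternion.sq_norm_eq]
      simp [hy0J, hy0K]
    have hy0_norm : ‖y 0‖ = 1 := by
      have := lp.norm_single (E := fun _ : ℕ => ℍ[ℝ]) (p := 2) two_pos 0 (y 0)
      rwa [← hy, hy_norm, eq_comm] at this
    have hw1_le : ‖w 1‖ ≤ 1 := hw_norm ▸ lp.norm_apply_le_norm two_ne_zero w 1
    nlinarith [norm_nonneg (w 1)]
end
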